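/- arXiv:2306.06231 — 6 statements merged into one kernel-verified Lean document; each statement's English description precedes it below -/
import Mathlib

section
/- Let n ≥ 2 be an integer and α > −1 a real number. Define the matrix sequence X = (X_ξ)_{ξ∈Ω_n} by X_2 := I_n and X_ξ := 0 ∈ M_{d_ξ}(ℂ) for every ξ ∈ Ω_n with ξ ≠ 2. Then X ∈ L_n, and for every a ∈ L∞_lim([0,1)) one has sup_{ξ∈Ω_n} ‖X_ξ − γ(a)_ξ‖ ≥ 1/2, where ‖·‖ is the ℓ²-operator norm on matrices. In particular, X does not belong to the closure of {γ(a) : a ∈ L∞_lim([0,1))} in the sup-operator-norm, so this closure is a proper subset of L_n. -/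
open MeasureTheory Filter
open scoped ENNReal

noncomputable section

/-- Generalized binomial coefficient `x(x-1)⋯(x-j+1)/j!`. -/
def gbinom (x : ℝ) (j : ℕ) : ℝ :=
  (∏ i ∈ Finset.range j, (x - i)) / (Nat.factorial j)

/-- Shifted Jacobi polynomial `Q_m^{(α,β)}` on `[0,1]`:
`Q_m^{(α,β)}(t) = Σ_{k=0}^m binom(α+β+m+k,k)·binom(β+m,m-k)·(-1)^{m-k}·t^k`. -/
def jacQ (α β : ℝ) (m : ℕ) (t : ℝ) : ℝ :=
  ∑ k ∈ Finset.range (m + 1),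
    gbinom (α + β + m + k) k * gbinom (β + m) (m - k) * (-1 : ℝ) ^ (m - k) * t ^ k

/-- Normalizing coefficient
`κ(α,β,m) = sqrt((2m+α+β+1)·Γ(m+α+β+1)·m!/(Γ(m+α+1)·Γ(m+β+1)))`. -/
def jacCoef (α β : ℝ) (m : ℕ) : ℝ :=
  Real.sqrt ((2 * m + α + β + 1) * Real.Gamma (m + α + β + 1) * (Nat.factorial m) /
    (Real.Gamma (m + α + 1) * Real.Gamma (m + β + 1)))

/-- Jacobi function `J_m^{(α,β)}(t) = κ(α,β,m)·(1-t)^{α/2}·t^{β/2}·Q_m^{(α,β)}(t)`. -/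
def jacJ (α β : ℝ) (m : ℕ) (t : ℝ) : ℝ :=
  jacCoef α β m * (1 - t) ^ (α / 2) * t ^ (β / 2) * jacQ α β m t

/-- `dd n ξ = min(n+ξ, n)` (for `ξ ≥ 1-n`), written as a total function into `ℕ`. -/
def dd (n : ℕ) (ξ : ℤ) : ℕ := n - (-ξ).toNat

lemma dd_le (n : ℕ) (ξ : ℤ) : dd n ξ ≤ n := Nat.sub_le _ _

/-- The set `Ω_n = {ξ ∈ ℤ : ξ ≥ -n+1}` as a subtype. -/
abbrev Om (n : ℕ) : Type := {ξ : ℤ // 1 - (n : ℤ) ≤ ξ}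

/-- The entry `γ(a)_{ξ,j,k} = κ(α,|ξ|,j)·κ(α,|ξ|,k)·
∫₀¹ a(√t)·Q_j^{(α,|ξ|)}(t)·Q_k^{(α,|ξ|)}(t)·(1-t)^α·t^{|ξ|} dt`. -/
def gammaEnt (α : ℝ) (a : ℝ → ℂ) (ξ : ℤ) (j k : ℕ) : ℂ :=
  ((jacCoef α ξ.natAbs j * jacCoef α ξ.natAbs k : ℝ) : ℂ) *
    ∫ t in (0:ℝ)..1, a (Real.sqrt t) *
      ((jacQ α ξ.natAbs j t * jacQ α ξ.natAbs k t * (1 - t) ^ α * t ^ (ξ.natAbs) : ℝ) : ℂ)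

/-- The matrix `γ(a)_ξ ∈ M_{d_ξ}(ℂ)`. -/
def gammaMat (n : ℕ) (α : ℝ) (a : ℝ → ℂ) (ξ : ℤ) :
    Matrix (Fin (dd n ξ)) (Fin (dd n ξ)) ℂ :=
  Matrix.of fun j k => gammaEnt α a ξ (j : ℕ) (k : ℕ)

/-- Bounded measurable functions on `[0,1)` having a finite limit at `1⁻`. -/
def LinfLim (a : ℝ → ℂ) : Prop :=
  Measurable a ∧ (∃ C : ℝ, ∀ r ∈ Set.Ico (0:ℝ) 1, ‖a r‖ ≤ C) ∧
    ∃ ω : ℂ, Tendsto a (nhdsWithin 1 (Set.Ico (0:ℝ) 1)) (nhds ω)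

/-- The generating symbol `g_p(t) = Q_p^{(α,0)}(t²)`, as a complex-valued function. -/
def gSym (α : ℝ) (p : ℕ) (t : ℝ) : ℂ := ((jacQ α 0 p (t ^ 2) : ℝ) : ℂ)

/-- `⟨A w, w⟩ = Σ_{j,k} conj(w_j)·A_{j,k}·w_k`. -/
def innerForm {d : ℕ} (A : Matrix (Fin d) (Fin d) ℂ) (w : Fin d → ℂ) : ℂ :=
  ∑ j : Fin d, ∑ k : Fin d, (starRingEnd ℂ) (w j) * A j k * w k

open scoped Matrix.Norms.L2Operator

/-!
Both matrices γ(a)_2 and γ(a)_0 see the moment ν = ∫₀¹ a(√t) t² (1-t)^α dt.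
At ξ = 2 the first diagonal entry is κ(α,2,0)² ν. At ξ = 0, the identity
t = (Q₀ + Q₁)(t)/(α+2) for Q_j = Q_j^{(α,0)} gives a vector w with ⟨γ(a)_0 w, w⟩ = ν and
κ(α,2,0)² ‖w‖² = 1. Hence 1 ≤ |1 - κ(α,2,0)² ν| + κ(α,2,0)² |ν| ≤ ‖I - γ(a)_2‖ + ‖γ(a)_0‖,
and X_2 - γ(a)_2 = I - γ(a)_2, X_0 - γ(a)_0 = -γ(a)_0 cannot both have norm < 1/2.
-/

section WeightedIntegral

variable (α : ℝ) (a : ℝ → ℂ)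

def weightedIntegral (g : ℝ → ℝ) : ℂ :=
  ∫ t in (0:ℝ)..1, a (Real.sqrt t) * ((g t * (1 - t) ^ α : ℝ) : ℂ)

variable {α a}

lemma intervalIntegrable_one_sub_rpow (hα : -1 < α) :
    IntervalIntegrable (fun t : ℝ => (1 - t) ^ α) volume 0 1 := by
  simpa using
    ((intervalIntegral.intervalIntegrable_rpow' (a := 0) (b := 1) hα).comp_sub_left 1).symm

lemma intervalIntegrable_weighted (hα : -1 < α) (ha : Measurable a) {C : ℝ}
    (hC : ∀ r ∈ Set.Ico (0:ℝ) 1, ‖a r‖ ≤ C) {g : ℝ → ℝ} (hg : Continuous g) :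
    IntervalIntegrable (fun t => a (Real.sqrt t) * ((g t * (1 - t) ^ α : ℝ) : ℂ)) volume 0 1 := by
  obtain ⟨M, hM⟩ := (isCompact_Icc (a := (0:ℝ)) (b := 1)).exists_bound_of_continuousOn
    hg.continuousOn
  have hweight : IntegrableOn (fun t : ℝ => (((1 - t) ^ α : ℝ) : ℂ)) (Set.Ioc 0 1) :=
    (intervalIntegrable_one_sub_rpow hα).1.ofReal
  have hbound : ∀ᵐ t ∂(volume.restrict (Set.Ioc (0:ℝ) 1)),
      ‖a (Real.sqrt t) * ((g t : ℝ) : ℂ)‖ ≤ C * M := by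
    filter_upwards [ae_restrict_mem measurableSet_Ioc, Measure.ae_ne _ 1] with t ht ht1
    have hsqrt : Real.sqrt t ∈ Set.Ico (0:ℝ) 1 :=
      ⟨Real.sqrt_nonneg t, (Real.sqrt_lt' one_pos).2 (by simpa using lt_of_le_of_ne ht.2 ht1)⟩
    rw [norm_mul, Complex.norm_real, Real.norm_eq_abs]
    exact mul_le_mul (hC _ hsqrt) (by simpa using hM t (Set.Ioc_subset_Icc_self ht))
      (abs_nonneg _) ((norm_nonneg _).trans (hC 0 (by simp)))
  have hmeas : AEStronglyMeasurable (fun t : ℝ => a (Real.sqrt t) * ((g t : ℝ) : ℂ))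
      (volume.restrict (Set.Ioc (0:ℝ) 1)) :=
    ((ha.comp Real.continuous_sqrt.measurable).mul
      (Complex.measurable_ofReal.comp hg.measurable)).aestronglyMeasurable
  refine (intervalIntegrable_iff_integrableOn_Ioc_of_le zero_le_one).2 ?_
  refine (hweight.bdd_mul hmeas hbound).congr (Eventually.of_forall fun t => ?_)
  simp only [Complex.ofReal_mul]
  ring

lemma weightedIntegral_const_mul (r : ℝ) (g : ℝ → ℝ) :
    weightedIntegral α a (fun t => r * g t) = r * weightedIntegral α a g := by
  rw [weightedIntegral, weightedIntegral, ← intervalIntegral.integral_const_mul]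
  refine intervalIntegral.integral_congr fun t _ => ?_
  push_cast
  ring

lemma weightedIntegral_finsetSum (hα : -1 < α) (ha : Measurable a) {C : ℝ}
    (hC : ∀ r ∈ Set.Ico (0:ℝ) 1, ‖a r‖ ≤ C) {ι : Type*} (s : Finset ι) {g : ι → ℝ → ℝ}
    (hg : ∀ i, Continuous (g i)) :
    weightedIntegral α a (fun t => ∑ i ∈ s, g i t) = ∑ i ∈ s, weightedIntegral α a (g i) := by
  simp only [weightedIntegral]
  rw [← intervalIntegral.integral_finsetSum
    fun i _ => intervalIntegrable_weighted hα ha hC (hg i)]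
  refine intervalIntegral.integral_congr fun t _ => ?_
  simp only [Finset.sum_mul, Complex.ofReal_sum, Finset.mul_sum]

end WeightedIntegral

lemma jacQ_zero (α β t : ℝ) : jacQ α β 0 t = 1 := by
  simp [jacQ, gbinom]

lemma jacQ_one (α t : ℝ) : jacQ α 0 1 t = (α + 2) * t - 1 := by
  simp [jacQ, Finset.sum_range_succ, gbinom]
  ring

lemma continuous_jacQ (α β : ℝ) (m : ℕ) : Continuous (jacQ α β m) := by
  unfold jacQ
  fun_prop

lemma gammaEnt_eq_weightedIntegral (α : ℝ) (a : ℝ → ℂ) (ξ : ℤ) (j k : ℕ) :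
    gammaEnt α a ξ j k = ((jacCoef α ξ.natAbs j * jacCoef α ξ.natAbs k : ℝ) : ℂ) *
      weightedIntegral α a (fun t => jacQ α ξ.natAbs j t * jacQ α ξ.natAbs k t * t ^ ξ.natAbs) := by
  rw [gammaEnt, weightedIntegral]
  congr 1
  refine intervalIntegral.integral_congr fun t _ => ?_
  push_cast
  ring

lemma innerForm_gammaMat_ofReal {n : ℕ} {α : ℝ} {a : ℝ → ℂ} (hα : -1 < α) (ha : Measurable a)
    {C : ℝ} (hC : ∀ r ∈ Set.Ico (0:ℝ) 1, ‖a r‖ ≤ C) (ξ : ℤ) (w : Fin (dd n ξ) → ℝ) :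
    innerForm (gammaMat n α a ξ) (fun i => (w i : ℂ)) = weightedIntegral α a
      (fun t => (∑ j, w j * jacCoef α ξ.natAbs j * jacQ α ξ.natAbs j t) ^ 2 * t ^ ξ.natAbs) := by
  have hcont : ∀ j k : Fin (dd n ξ), Continuous fun t => w j * w k *
      (jacCoef α ξ.natAbs j * jacCoef α ξ.natAbs k) *
      (jacQ α ξ.natAbs j t * jacQ α ξ.natAbs k t * t ^ ξ.natAbs) := fun j k => by
    have := continuous_jacQ α ξ.natAbs j
    have := continuous_jacQ α ξ.natAbs k
    fun_prop
  calc innerForm (gammaMat n α a ξ) (fun i => (w i : ℂ))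
      = ∑ j, ∑ k, weightedIntegral α a (fun t => w j * w k *
          (jacCoef α ξ.natAbs j * jacCoef α ξ.natAbs k) *
          (jacQ α ξ.natAbs j t * jacQ α ξ.natAbs k t * t ^ ξ.natAbs)) := by
        simp only [innerForm, gammaMat, Matrix.of_apply, Complex.conj_ofReal,
          gammaEnt_eq_weightedIntegral]
        refine Finset.sum_congr rfl fun j _ => Finset.sum_congr rfl fun k _ => ?_
        rw [weightedIntegral_const_mul]
        push_cast
        ring
    _ = weightedIntegral α a
      (fun t => (∑ j, w j * jacCoef α ξ.natAbs j * jacQ α ξ.natAbs j t) ^ 2 * t ^ ξ.natAbs) := by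
        simp_rw [← weightedIntegral_finsetSum hα ha hC _ (hcont _)]
        rw [← weightedIntegral_finsetSum hα ha hC _ fun j =>
          continuous_finsetSum _ fun k _ => hcont j k]
        congr 1
        ext t
        rw [sq, Finset.sum_mul_sum, Finset.sum_mul]
        refine Finset.sum_congr rfl fun j _ => ?_
        rw [Finset.sum_mul]
        refine Finset.sum_congr rfl fun k _ => ?_
        ring

section JacCoef

variable {α : ℝ} (hα : -1 < α)
include hα

lemma jacCoef_sq_zero_zero : jacCoef α 0 0 ^ 2 = α + 1 := by
  have hΓ : Real.Gamma (α + 1) ≠ 0 := (Real.Gamma_pos_of_pos (by linarith)).ne'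
  rw [jacCoef]
  convert Real.sq_sqrt (show 0 ≤ α + 1 by linarith) using 3
  simp only [Nat.cast_zero, Nat.factorial_zero, Nat.cast_one, mul_zero, zero_add, add_zero,
    Real.Gamma_one, mul_one]
  field_simp

lemma jacCoef_sq_zero_one : jacCoef α 0 1 ^ 2 = α + 3 := by
  have hΓ : Real.Gamma (α + 2) ≠ 0 := (Real.Gamma_pos_of_pos (by linarith)).ne'
  rw [jacCoef]
  convert Real.sq_sqrt (show 0 ≤ α + 3 by linarith) using 3
  simp only [Nat.cast_one, Nat.factorial_one, add_zero, mul_one]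
  rw [show (1:ℝ) + α + 1 = α + 2 by ring, show (1:ℝ) + 1 = 2 by norm_num, Real.Gamma_two]
  field_simp
  ring

lemma jacCoef_sq_two_zero : jacCoef α 2 0 ^ 2 = (α + 1) * (α + 2) * (α + 3) / 2 := by
  have hΓ : Real.Gamma (α + 1) ≠ 0 := (Real.Gamma_pos_of_pos (by linarith)).ne'
  have hΓ3 : Real.Gamma (α + 2 + 1) = (α + 2) * (α + 1) * Real.Gamma (α + 1) := by
    rw [Real.Gamma_add_one (by linarith), show α + 2 = α + 1 + 1 by ring,
      Real.Gamma_add_one (by linarith)]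
    ring
  rw [jacCoef]
  convert Real.sq_sqrt (show 0 ≤ (α + 1) * (α + 2) * (α + 3) / 2 by
    have : 0 < α + 1 := by linarith
    have : 0 < α + 2 := by linarith
    have : 0 < α + 3 := by linarith
    positivity) using 3
  norm_num
  rw [hΓ3]
  field_simp
  ring

end JacCoef

section InnerForm

variable {d : ℕ}

lemma innerForm_single (A : Matrix (Fin d) (Fin d) ℂ) (i : Fin d) :
    innerForm A (Pi.single i 1) = A i i := by
  simp [innerForm, Pi.single_apply]

lemma norm_innerForm_le (A : Matrix (Fin d) (Fin d) ℂ) (w : Fin d → ℂ) :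
    ‖innerForm A w‖ ≤ ‖A‖ * ∑ i, ‖w i‖ ^ 2 := by
  set v : EuclideanSpace ℂ (Fin d) := WithLp.toLp 2 w
  have hinner : innerForm A w = inner ℂ v ((EuclideanSpace.equiv (Fin d) ℂ).symm (A.mulVec w)) := by
    simp only [innerForm, PiLp.inner_apply, RCLike.inner_apply]
    refine Finset.sum_congr rfl fun j _ => ?_
    simp [v, Matrix.mulVec, dotProduct, Finset.sum_mul]
    exact Finset.sum_congr rfl fun k _ => by ring
  calc ‖innerForm A w‖ ≤ ‖v‖ * (‖A‖ * ‖v‖) := by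
        rw [hinner]
        exact (norm_inner_le_norm _ _).trans
          (mul_le_mul_of_nonneg_left (Matrix.l2_opNorm_mulVec A v) (norm_nonneg _))
    _ = ‖A‖ * ∑ i, ‖w i‖ ^ 2 := by
        rw [← EuclideanSpace.norm_sq_eq v]
        ring

end InnerForm

section Separation

variable {n : ℕ} {α : ℝ} {a : ℝ → ℂ} (hn : 2 ≤ n) (hα : -1 < α) (ha : Measurable a) {C : ℝ}
  (hC : ∀ r ∈ Set.Ico (0:ℝ) 1, ‖a r‖ ≤ C)
include hn hα ha hC

lemma exists_innerForm_gammaMat_zero_eq :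
    ∃ w : Fin (dd n 0) → ℝ, innerForm (gammaMat n α a 0) (fun i => (w i : ℂ)) =
      weightedIntegral α a (fun t => t ^ 2) ∧ jacCoef α 2 0 ^ 2 * ∑ i, ‖(w i : ℂ)‖ ^ 2 = 1 := by
  have hd : 2 ≤ dd n 0 := by unfold dd; omega
  set i₀ : Fin (dd n 0) := ⟨0, by omega⟩
  set i₁ : Fin (dd n 0) := ⟨1, by omega⟩
  have hne : i₀ ≠ i₁ := by simp [i₀, i₁, Fin.ext_iff]
  have hκ₀ := jacCoef_sq_zero_zero hα
  have hκ₁ := jacCoef_sq_zero_one hα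
  have hκ₀' : jacCoef α 0 0 ≠ 0 := fun h => by simp [h] at hκ₀; linarith
  have hκ₁' : jacCoef α 0 1 ≠ 0 := fun h => by simp [h] at hκ₁; linarith
  have hα₂ : α + 2 ≠ 0 := by linarith
  set c := 1 / (α + 2)
  refine ⟨Pi.single i₀ (c / jacCoef α 0 0) + Pi.single i₁ (c / jacCoef α 0 1), ?_, ?_⟩
  · rw [innerForm_gammaMat_ofReal hα ha hC]
    congr 1
    ext t
    rw [Fintype.sum_eq_add i₀ i₁ hne (fun i hi => by simp [hi.1, hi.2])]
    simp only [Pi.add_apply, Pi.single_eq_same, Pi.single_eq_of_ne hne, Pi.single_eq_of_ne hne.symm,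
      add_zero, zero_add, i₀, i₁, Int.natAbs_zero, Nat.cast_zero, pow_zero,
      mul_one, jacQ_zero, jacQ_one, div_mul_cancel₀ _ hκ₀', div_mul_cancel₀ _ hκ₁', c]
    field_simp
    ring
  · rw [Fintype.sum_eq_add i₀ i₁ hne (fun i hi => by simp [hi.1, hi.2]),
      jacCoef_sq_two_zero hα]
    simp only [Pi.add_apply, Pi.single_eq_same, Pi.single_eq_of_ne hne, Pi.single_eq_of_ne hne.symm,
      add_zero, zero_add, Complex.norm_real, Real.norm_eq_abs, sq_abs, div_pow, hκ₀, hκ₁, c]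
    have : α + 1 ≠ 0 := by linarith
    have : α + 3 ≠ 0 := by linarith
    field_simp
    ring

lemma one_le_norm_one_sub_gammaMat_two_add_norm_gammaMat_zero :
    1 ≤ ‖1 - gammaMat n α a 2‖ + ‖gammaMat n α a 0‖ := by
  obtain ⟨w, hw, hwK⟩ := exists_innerForm_gammaMat_zero_eq hn hα ha hC
  set ν := weightedIntegral α a fun t => t ^ 2
  set K := jacCoef α 2 0 ^ 2
  have hd : 1 ≤ dd n 2 := by unfold dd; omega
  have hγ₂ : gammaMat n α a 2 ⟨0, hd⟩ ⟨0, hd⟩ = (K : ℂ) * ν := by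
    simp [gammaMat, gammaEnt_eq_weightedIntegral, jacQ_zero, K, ν, sq]
  have h₂ : ‖1 - (K : ℂ) * ν‖ ≤ ‖1 - gammaMat n α a 2‖ := by
    have h := norm_innerForm_le (1 - gammaMat n α a 2) (Pi.single ⟨0, hd⟩ 1)
    rwa [innerForm_single, Matrix.sub_apply, Matrix.one_apply_eq, hγ₂,
      Fintype.sum_eq_single ⟨0, hd⟩ fun i hi => by simp [hi], Pi.single_eq_same, norm_one,
      one_pow, mul_one] at h
  have h₀ : ‖(K : ℂ) * ν‖ ≤ ‖gammaMat n α a 0‖ :=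
    calc ‖(K : ℂ) * ν‖ = K * ‖ν‖ := by
          rw [norm_mul, Complex.norm_real, Real.norm_of_nonneg (sq_nonneg _)]
      _ ≤ K * (‖gammaMat n α a 0‖ * ∑ i, ‖(w i : ℂ)‖ ^ 2) := by
          gcongr
          rw [← hw]
          exact norm_innerForm_le _ _
      _ = ‖gammaMat n α a 0‖ := by rw [mul_left_comm, hwK, mul_one]
  calc (1 : ℝ) = ‖(1 - (K : ℂ) * ν) + K * ν‖ := by simp
    _ ≤ ‖1 - (K : ℂ) * ν‖ + ‖(K : ℂ) * ν‖ := norm_add_le _ _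
    _ ≤ _ := add_le_add h₂ h₀

end Separation

/-- the matrix sequence `X` with `X_2 = I_n` and `X_ξ = 0` for `ξ ≠ 2` belongs
to `L_n`, but its sup-norm distance to every `γ(a)`, `a ∈ L∞_lim([0,1))`, is at least `1/2`;
hence the closure of `{γ(a)}` is a proper subset of `L_n`. -/
theorem statement1 (n : ℕ) (hn : 2 ≤ n) (α : ℝ) (hα : -1 < α)
    (X : ∀ ξ : Om n, Matrix (Fin (dd n ξ.1)) (Fin (dd n ξ.1)) ℂ)
    (hX2 : X ⟨2, by omega⟩ = 1)
    (hX0 : ∀ ξ : Om n, ξ.1 ≠ 2 → X ξ = 0) :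
    (∃ ω : ℂ, ∀ j k : Fin n,
      Tendsto (fun m : ℕ =>
          X ⟨(m : ℤ), by omega⟩
            (Fin.cast (show n = dd n ((m : ℕ) : ℤ) by unfold dd; omega) j)
            (Fin.cast (show n = dd n ((m : ℕ) : ℤ) by unfold dd; omega) k))
        atTop (nhds (if j = k then ω else 0))) ∧
    ∀ a : ℝ → ℂ, LinfLim a →
      (1 / 2 : ℝ≥0∞) ≤ ⨆ ξ : Om n, (‖X ξ - gammaMat n α a ξ.1‖₊ : ℝ≥0∞) := by
  refine ⟨⟨0, fun j k => tendsto_const_nhds.congr' ?_⟩, fun a ⟨ha, ⟨C, hC⟩, _⟩ => ?_⟩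
  · filter_upwards [eventually_ge_atTop 3] with m hm
    rw [hX0 ⟨m, by omega⟩ (by show (m : ℤ) ≠ 2; omega)]
    simp
  set S := ⨆ ξ : Om n, (‖X ξ - gammaMat n α a ξ.1‖₊ : ℝ≥0∞)
  have hle : ∀ ξ : Om n, (‖X ξ - gammaMat n α a ξ.1‖₊ : ℝ≥0∞) ≤ S :=
    le_iSup (fun ξ : Om n => (‖X ξ - gammaMat n α a ξ.1‖₊ : ℝ≥0∞))
  have h₂ := hle ⟨2, by omega⟩
  have h₀ := hle ⟨0, by omega⟩
  rw [hX2] at h₂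
  rw [hX0 _ (by show (0 : ℤ) ≠ 2; norm_num), zero_sub, nnnorm_neg] at h₀
  have hsep := one_le_norm_one_sub_gammaMat_two_add_norm_gammaMat_zero hn hα ha hC
  refine ENNReal.div_le_of_le_mul ?_
  calc (1 : ℝ≥0∞) ≤ ‖1 - gammaMat n α a 2‖₊ + ‖gammaMat n α a 0‖₊ := by
        exact_mod_cast hsep
    _ ≤ S * 2 := by rw [mul_two]; exact add_le_add h₂ h₀
end
end

section
/- Let α > −1 be a real number. For a bounded measurable a : [0,1) → ℂ and ξ ∈ ℕ₀, set γ₁(a)_ξ := (Γ(α+ξ+2)/(Γ(α+1)·ξ!))·∫₀¹ a(√t)·(1−t)^α·t^ξ dt. Then the set of sequences {(γ₁(a)_ξ)_{ξ∈ℕ₀} : a ∈ L∞_lim([0,1))} is dense in the space of convergent complex sequences with the supremum norm; that is, for every sequence x : ℕ₀ → ℂ having a finite limit and every ε > 0 there exists a ∈ L∞_lim([0,1)) such that sup_{ξ∈ℕ₀} |γ₁(a)_ξ − x_ξ| ≤ ε. -/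
/-!
For the symbol `a(r) = (1 - r²)^β` (`β ≥ 0`) the Beta integral gives
`γ₁(a)_ξ = Γ(α+ξ+2) Γ(α+β+1) / (Γ(α+1) Γ(α+β+ξ+2))`, a positive sequence in `ξ` whose consecutive
ratios are `(α+ξ+2)/(α+β+ξ+2)`. For `β = 0` it is constant `1`; for large `β` it decays so fast
beyond any fixed index `n` that, normalised to `1` at `n`, its tail after `n` is arbitrarily small.
Subtracting the limit of `x` and truncating, it suffices to approximate finitely supported
sequences by linear combinations of these; this goes by induction on the support, removing the
last entry with a normalised sequence of large `β` and leaving the earlier entries to the induction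
hypothesis. The symbols used are continuous, hence in `L∞_lim([0,1))`.
-/

open MeasureTheory Filter
open scoped ENNReal

noncomputable section

/-- `γ₁(a)_ξ = (Γ(α+ξ+2)/(Γ(α+1)·ξ!))·∫₀¹ a(√t)·(1-t)^α·t^ξ dt`. -/
def gammaOne (α : ℝ) (a : ℝ → ℂ) (ξ : ℕ) : ℂ :=
  ((Real.Gamma (α + ξ + 2) / (Real.Gamma (α + 1) * (Nat.factorial ξ)) : ℝ) : ℂ) *
    ∫ t in (0:ℝ)..1, a (Real.sqrt t) * (((1 - t) ^ α * t ^ ξ : ℝ) : ℂ)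

lemma intervalIntegrable_one_sub_rpow_mul_pow {s : ℝ} (hs : -1 < s) (ξ : ℕ) :
    IntervalIntegrable (fun t : ℝ => (1 - t) ^ s * t ^ ξ) volume 0 1 := by
  have h := (intervalIntegral.intervalIntegrable_rpow' (a := 0) (b := 1) hs).comp_sub_left 1
  rw [sub_zero, sub_self] at h
  exact h.symm.mul_continuousOn (by fun_prop)

lemma integral_one_sub_rpow_mul_pow {s : ℝ} (hs : -1 < s) (ξ : ℕ) :
    ∫ t in (0:ℝ)..1, (((1 - t) ^ s * t ^ ξ : ℝ) : ℂ) =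
      ((Real.Gamma (ξ + 1) * Real.Gamma (s + 1) / Real.Gamma (ξ + s + 2) : ℝ) : ℂ) := by
  have hbeta := Complex.betaIntegral_eq_Gamma_mul_div (ξ + 1) (s + 1)
    (by simp; positivity) (by simp; linarith)
  rw [Complex.betaIntegral] at hbeta
  push_cast [← Complex.Gamma_ofReal]
  rw [show (ξ : ℂ) + s + 2 = ξ + 1 + (s + 1) by ring, ← hbeta]
  refine intervalIntegral.integral_congr fun t ht => ?_
  rw [Set.uIcc_of_le zero_le_one] at ht
  simp only [add_sub_cancel_right, Complex.cpow_natCast]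
  rw [Complex.ofReal_cpow (by linarith [ht.2])]
  push_cast
  ring

def gammaOnePow (α β : ℝ) (ξ : ℕ) : ℝ :=
  Real.Gamma (α + ξ + 2) * Real.Gamma (α + β + 1) /
    (Real.Gamma (α + 1) * Real.Gamma (α + β + ξ + 2))

section gammaOnePow

variable {α β : ℝ}

lemma gammaOnePow_pos (hα : -1 < α) (hβ : 0 ≤ β) (ξ : ℕ) : 0 < gammaOnePow α β ξ := by
  have hξ : (0:ℝ) ≤ ξ := ξ.cast_nonneg
  unfold gammaOnePow
  apply_rules [div_pos, mul_pos, Real.Gamma_pos_of_pos] <;> linarith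

lemma gammaOnePow_zero_right (hα : -1 < α) (ξ : ℕ) : gammaOnePow α 0 ξ = 1 := by
  have hξ : (0:ℝ) ≤ ξ := ξ.cast_nonneg
  have h₁ := (Real.Gamma_pos_of_pos (show 0 < α + 1 by linarith)).ne'
  have h₂ := (Real.Gamma_pos_of_pos (show 0 < α + ξ + 2 by linarith)).ne'
  simp only [gammaOnePow, add_zero]
  field_simp

lemma gammaOnePow_succ (hα : -1 < α) (hβ : 0 ≤ β) (ξ : ℕ) :
    gammaOnePow α β (ξ + 1) = gammaOnePow α β ξ * ((α + ξ + 2) / (α + β + ξ + 2)) := by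
  have hξ : (0:ℝ) ≤ ξ := ξ.cast_nonneg
  have h₁ := (Real.Gamma_pos_of_pos (show 0 < α + 1 by linarith)).ne'
  have h₂ := (Real.Gamma_pos_of_pos (show 0 < α + β + ξ + 2 by linarith)).ne'
  have h₃ : α + β + ξ + 2 ≠ 0 := by linarith
  simp only [gammaOnePow, Nat.cast_succ, show ∀ y : ℝ, y + (ξ + 1) + 2 = y + ξ + 2 + 1 by
    intro y; ring, Real.Gamma_add_one (show α + ξ + 2 ≠ 0 by linarith),
    Real.Gamma_add_one h₃]
  field_simp

lemma gammaOnePow_le_mul_of_lt (hα : -1 < α) (hβ : 0 ≤ β) {n ξ : ℕ} (h : n < ξ) :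
    gammaOnePow α β ξ ≤ gammaOnePow α β n * ((α + n + 2) / (α + β + n + 2)) := by
  induction ξ, h using Nat.le_induction with
  | base => exact (gammaOnePow_succ hα hβ n).le
  | succ ξ hnξ ih =>
    have hξ : (0:ℝ) ≤ ξ := ξ.cast_nonneg
    have hratio : (α + ξ + 2) / (α + β + ξ + 2) ≤ 1 := by
      rw [div_le_one (by linarith)]; linarith
    rw [gammaOnePow_succ hα hβ]
    exact (mul_le_of_le_one_right (gammaOnePow_pos hα hβ ξ).le hratio).trans ih

lemma exists_gammaOnePow_le_mul (hα : -1 < α) (n : ℕ) {η : ℝ} (hη : 0 < η) :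
    ∃ β, 0 ≤ β ∧ ∀ ξ, n < ξ → gammaOnePow α β ξ ≤ η * gammaOnePow α β n := by
  have hn : (0:ℝ) < α + n + 2 := by linarith [n.cast_nonneg (α := ℝ)]
  set β := (α + n + 2) / η
  have hβ : 0 ≤ β := by positivity
  have hηβ : η * β = α + n + 2 := mul_div_cancel₀ _ hη.ne'
  have hratio : (α + n + 2) / (α + β + n + 2) ≤ η := by
    rw [div_le_iff₀ (by linarith)]
    nlinarith
  refine ⟨β, hβ, fun ξ hξ => ?_⟩
  calc gammaOnePow α β ξ ≤ gammaOnePow α β n * ((α + n + 2) / (α + β + n + 2)) :=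
        gammaOnePow_le_mul_of_lt hα hβ hξ
    _ ≤ gammaOnePow α β n * η := by
        gcongr
        exact (gammaOnePow_pos hα hβ n).le
    _ = η * gammaOnePow α β n := mul_comm _ _

end gammaOnePow

def powSym (β r : ℝ) : ℂ := ((1 - r ^ 2) ^ β : ℝ)

section gammaOne

variable {α β : ℝ}

lemma continuous_powSym (hβ : 0 ≤ β) : Continuous (powSym β) :=
  Complex.continuous_ofReal.comp ((Real.continuous_rpow_const hβ).comp (by fun_prop))

lemma gammaOne_powSym (hα : -1 < α) (hβ : 0 ≤ β) (ξ : ℕ) :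
    gammaOne α (powSym β) ξ = gammaOnePow α β ξ := by
  have hintegrand : ∫ t in (0:ℝ)..1, powSym β (Real.sqrt t) * (((1 - t) ^ α * t ^ ξ : ℝ) : ℂ) =
      ∫ t in (0:ℝ)..1, (((1 - t) ^ (α + β) * t ^ ξ : ℝ) : ℂ) := by
    refine intervalIntegral.integral_congr_ae ?_
    filter_upwards [volume.ae_ne 1] with t ht₁ ht
    rw [Set.uIoc_of_le zero_le_one] at ht
    have h₁ : 0 < 1 - t := sub_pos.2 (lt_of_le_of_ne ht.2 ht₁)
    rw [powSym, Real.sq_sqrt ht.1.le, Real.rpow_add h₁]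
    push_cast
    ring
  have hξ : (0:ℝ) ≤ ξ := ξ.cast_nonneg
  have h₁ := (Real.Gamma_pos_of_pos (show 0 < α + 1 by linarith)).ne'
  have h₂ := (Real.Gamma_pos_of_pos (show 0 < (ξ : ℝ) + 1 by linarith)).ne'
  have h₃ := (Real.Gamma_pos_of_pos (show 0 < α + β + ξ + 2 by linarith)).ne'
  rw [gammaOne, hintegrand, integral_one_sub_rpow_mul_pow (by linarith) ξ, ← Complex.ofReal_mul,
    ← Real.Gamma_nat_eq_factorial, gammaOnePow, show (ξ : ℝ) + (α + β) + 2 = α + β + ξ + 2 by ring]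
  field_simp

lemma intervalIntegrable_gammaOne_integrand (hα : -1 < α) {a : ℝ → ℂ} (ha : Continuous a)
    (ξ : ℕ) :
    IntervalIntegrable (fun t => a (Real.sqrt t) * (((1 - t) ^ α * t ^ ξ : ℝ) : ℂ)) volume 0 1 :=
  have hw := intervalIntegrable_one_sub_rpow_mul_pow hα ξ
  IntervalIntegrable.continuousOn_mul ⟨hw.1.ofReal, hw.2.ofReal⟩
    (ha.comp Real.continuous_sqrt).continuousOn

lemma gammaOne_add (hα : -1 < α) {a b : ℝ → ℂ} (ha : Continuous a) (hb : Continuous b)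
    (ξ : ℕ) : gammaOne α (a + b) ξ = gammaOne α a ξ + gammaOne α b ξ := by
  simp only [gammaOne, Pi.add_apply, add_mul]
  rw [intervalIntegral.integral_add (intervalIntegrable_gammaOne_integrand hα ha ξ)
    (intervalIntegrable_gammaOne_integrand hα hb ξ), mul_add]

lemma gammaOne_smul (c : ℂ) (a : ℝ → ℂ) (ξ : ℕ) :
    gammaOne α (c • a) ξ = c * gammaOne α a ξ := by
  simp only [gammaOne, Pi.smul_apply, smul_eq_mul, mul_assoc, intervalIntegral.integral_const_mul]
  ring

end gammaOne

def powSpan (α : ℝ) : Submodule ℂ (ℕ → ℂ) :=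
  Submodule.span ℂ (Set.range fun β : Set.Ici (0:ℝ) => fun ξ => (gammaOnePow α β ξ : ℂ))

section powSpan

variable {α : ℝ}

lemma exists_continuous_gammaOne_eq (hα : -1 < α) {s : ℕ → ℂ} (hs : s ∈ powSpan α) :
    ∃ a, Continuous a ∧ ∀ ξ, gammaOne α a ξ = s ξ := by
  induction hs using Submodule.span_induction with
  | mem s hs =>
    obtain ⟨⟨β, hβ⟩, rfl⟩ := hs
    exact ⟨powSym β, continuous_powSym hβ, gammaOne_powSym hα hβ⟩
  | zero => exact ⟨0, continuous_const, fun ξ => by simp [gammaOne]⟩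
  | add s t _ _ hs ht =>
    obtain ⟨a, ha, has⟩ := hs
    obtain ⟨b, hb, hbt⟩ := ht
    exact ⟨a + b, ha.add hb, fun ξ => by rw [gammaOne_add hα ha hb, has, hbt, Pi.add_apply]⟩
  | smul c s _ hs =>
    obtain ⟨a, ha, has⟩ := hs
    exact ⟨c • a, ha.const_smul c, fun ξ => by rw [gammaOne_smul, has, Pi.smul_apply, smul_eq_mul]⟩

lemma exists_mem_powSpan_norm_sub_le (hα : -1 < α) (n : ℕ) (e : ℕ → ℂ)
    (he : ∀ ξ, n ≤ ξ → e ξ = 0) {δ : ℝ} (hδ : 0 < δ) :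
    ∃ s ∈ powSpan α, ∀ ξ, ‖s ξ - e ξ‖ ≤ δ := by
  induction n generalizing e δ with
  | zero => exact ⟨0, zero_mem _, fun ξ => by simp [he ξ ξ.zero_le, hδ.le]⟩
  | succ n ih =>
    set η := δ / (2 * (‖e n‖ + 1))
    obtain ⟨β, hβ, htail⟩ := exists_gammaOnePow_le_mul hα n (η := η) (by positivity)
    have hψ := gammaOnePow_pos hα hβ n
    -- `c • ψ` agrees with `e` at `n`, and by the choice of `β` stays below `δ / 2` after `n`.
    set ψ : ℕ → ℂ := fun ξ => (gammaOnePow α β ξ : ℂ)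
    set c := e n / ψ n
    set e' : ℕ → ℂ := fun ξ => if ξ < n then e ξ - c * ψ ξ else 0
    obtain ⟨s, hs, hse'⟩ := ih e' (fun ξ hξ => if_neg hξ.not_gt) (half_pos hδ)
    refine ⟨s + c • ψ, add_mem hs (Submodule.smul_mem _ _ (Submodule.subset_span
      ⟨⟨β, hβ⟩, rfl⟩)), fun ξ => ?_⟩
    have hcorr : ‖c * ψ ξ + e' ξ - e ξ‖ ≤ δ / 2 := by
      rcases lt_trichotomy ξ n with h | rfl | h
      · simp [e', h, (half_pos hδ).le]
      · simp [e', c, ψ, hψ.ne', (half_pos hδ).le]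
      · rw [he ξ h, show e' ξ = 0 from if_neg (by omega), add_zero, sub_zero]
        calc ‖c * ψ ξ‖ = ‖e n‖ * (gammaOnePow α β ξ / gammaOnePow α β n) := by
              simp [c, ψ, abs_of_pos hψ, abs_of_pos (gammaOnePow_pos hα hβ ξ)]
              ring
          _ ≤ ‖e n‖ * η := by
              gcongr
              exact (div_le_iff₀ hψ).2 (htail ξ h)
          _ ≤ δ / 2 := by
              rw [mul_div_assoc', div_le_div_iff₀ (by positivity) two_pos]
              nlinarith [norm_nonneg (e n)]
    calc ‖(s + c • ψ) ξ - e ξ‖ = ‖(s ξ - e' ξ) + (c * ψ ξ + e' ξ - e ξ)‖ := by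
          rw [Pi.add_apply, Pi.smul_apply, smul_eq_mul]
          ring_nf
      _ ≤ δ / 2 + δ / 2 := (norm_add_le _ _).trans (add_le_add (hse' ξ) hcorr)
      _ = δ := add_halves δ

end powSpan

lemma linfLim_of_continuous {a : ℝ → ℂ} (ha : Continuous a) : LinfLim a := by
  obtain ⟨C, hC⟩ := (isCompact_Icc (a := (0:ℝ)) (b := 1)).exists_bound_of_continuousOn ha.continuousOn
  exact ⟨ha.measurable, ⟨C, fun r hr => hC r (Set.Ico_subset_Icc_self hr)⟩, a 1,
    (ha.tendsto 1).mono_left nhdsWithin_le_nhds⟩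

/-- the sequences `γ₁(a)`, `a ∈ L∞_lim([0,1))`, are dense in the space of
convergent sequences with the supremum norm. -/
theorem statement3 (α : ℝ) (hα : -1 < α) (x : ℕ → ℂ)
    (hx : ∃ l : ℂ, Tendsto x atTop (nhds l)) (ε : ℝ) (hε : 0 < ε) :
    ∃ a : ℝ → ℂ, LinfLim a ∧ ∀ ξ : ℕ, ‖gammaOne α a ξ - x ξ‖ ≤ ε := by
  obtain ⟨l, hl⟩ := hx
  obtain ⟨N, hN⟩ := Metric.tendsto_atTop.1 hl (ε / 2) (half_pos hε)
  set e : ℕ → ℂ := fun ξ => if ξ < N then x ξ - l else 0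
  obtain ⟨s, hs, hse⟩ := exists_mem_powSpan_norm_sub_le hα N e (fun ξ hξ => if_neg hξ.not_gt)
    (half_pos hε)
  obtain ⟨a, ha, has⟩ := exists_continuous_gammaOne_eq hα
    (add_mem (Submodule.smul_mem _ l (Submodule.subset_span ⟨⟨0, Set.self_mem_Ici⟩, rfl⟩)) hs)
  refine ⟨a, linfLim_of_continuous ha, fun ξ => ?_⟩
  have hle : ‖l + e ξ - x ξ‖ ≤ ε / 2 := by
    by_cases h : ξ < N
    · simp [e, h, (half_pos hε).le]
    · rw [show e ξ = 0 from if_neg h, add_zero, norm_sub_rev, ← dist_eq_norm]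
      exact (hN ξ (not_lt.1 h)).le
  calc ‖gammaOne α a ξ - x ξ‖ = ‖(s ξ - e ξ) + (l + e ξ - x ξ)‖ := by
        simp only [has, Pi.add_apply, Pi.smul_apply, smul_eq_mul, gammaOnePow_zero_right hα,
          Complex.ofReal_one, mul_one]
        ring_nf
    _ ≤ ε / 2 + ε / 2 := (norm_add_le _ _).trans (add_le_add (hse ξ) hle)
    _ = ε := add_halves ε
end
end

section
/- Let α > −1 be a real number, m ∈ ℕ₀, and 0 < x < 1. Then lim_{β→+∞} sup_{t∈(0,x]} |J_m^{(α,β)}(t)| = 0, where the limit is taken over real β tending to +∞. -/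
open MeasureTheory Filter
open scoped ENNReal

noncomputable section

/-! For `β ≥ 2` and `t ∈ (0, x]` every factor of `J_m^{(α,β)}(t)` is either bounded or of polynomial
growth in `β`, except `t ^ (β / 2) ≤ (√x) ^ β`, which decays geometrically. The coefficients of `Q`
are products of at most `m` factors of size `O(β)`, and the only non-elementary growth, the
Gamma ratio `Γ(m+α+β+1) / Γ(m+β+1)` in `κ²`, is at most `(m+β+1+⌈α⌉)^⌈α⌉` by monotonicity of `Γ`
on `[2, ∞)` and the functional equation. A polynomial times a geometric decay tends to `0`. -/

open Real Set

lemma abs_gbinom_le (y : ℝ) (j : ℕ) : |gbinom y j| ≤ (|y| + j) ^ j := by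
  have hfac : (1 : ℝ) ≤ j.factorial := by exact_mod_cast j.factorial_pos
  rw [gbinom, abs_div, Finset.abs_prod, Nat.abs_cast]
  calc (∏ i ∈ Finset.range j, |y - i|) / j.factorial
      ≤ ∏ i ∈ Finset.range j, |y - i| :=
        div_le_self (Finset.prod_nonneg fun _ _ => abs_nonneg _) hfac
    _ ≤ ∏ _i ∈ Finset.range j, (|y| + j) := by
        gcongr with i hi
        have hij : (i : ℝ) ≤ j := by exact_mod_cast (Finset.mem_range.1 hi).le
        exact (abs_sub _ _).trans (by rw [Nat.abs_cast]; linarith)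
    _ = (|y| + j) ^ j := by rw [Finset.prod_const, Finset.card_range]

lemma abs_jacQ_le (α β : ℝ) (m : ℕ) {t : ℝ} (ht0 : 0 ≤ t) (ht1 : t ≤ 1) :
    |jacQ α β m t| ≤ (m + 1) * (|α| + |β| + 3 * m) ^ m := by
  set R := |α| + |β| + 3 * m
  have hterm : ∀ k ∈ Finset.range (m + 1), |gbinom (α + β + m + k) k * gbinom (β + m) (m - k) *
      (-1 : ℝ) ^ (m - k) * t ^ k| ≤ R ^ m := by
    intro k hk
    have hkm : k ≤ m := Finset.mem_range_succ_iff.1 hk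
    have hkR : (k : ℝ) ≤ m := by exact_mod_cast hkm
    have hαβ := abs_add_le α β
    have h1 : |gbinom (α + β + m + k) k| ≤ R ^ k := by
      refine (abs_gbinom_le _ _).trans (pow_le_pow_left₀ (by positivity) ?_ _)
      have := abs_add_le (α + β) (m + k)
      rw [abs_of_nonneg (by positivity : (0 : ℝ) ≤ m + k), ← add_assoc] at this
      linarith
    have h2 : |gbinom (β + m) (m - k)| ≤ R ^ (m - k) := by
      refine (abs_gbinom_le _ _).trans (pow_le_pow_left₀ (by positivity) ?_ _)
      have := abs_add_le β m
      rw [Nat.abs_cast] at this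
      rw [Nat.cast_sub hkm]
      linarith [abs_nonneg α]
    have h3 : |t| ^ k ≤ 1 := pow_le_one₀ (abs_nonneg t) (by rwa [abs_of_nonneg ht0])
    calc _ = |gbinom (α + β + m + k) k| * |gbinom (β + m) (m - k)| * |t| ^ k := by
          simp only [abs_mul, abs_pow, abs_neg, abs_one, one_pow, mul_one]
      _ ≤ R ^ k * R ^ (m - k) * 1 := by gcongr
      _ = R ^ m := by rw [mul_one, pow_mul_pow_sub _ hkm]
  calc |jacQ α β m t| ≤ ∑ _k ∈ Finset.range (m + 1), R ^ m :=
        (Finset.abs_sum_le_sum_abs _ _).trans (Finset.sum_le_sum hterm)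
    _ = (m + 1) * R ^ m := by simp

lemma Real.Gamma_add_nat_le_pow_mul {z : ℝ} (hz : 0 < z) (n : ℕ) :
    Gamma (z + n) ≤ (z + n) ^ n * Gamma z := by
  induction n with
  | zero => simp
  | succ n ih =>
    have hzn : 0 < z + n := by positivity
    calc Gamma (z + (n + 1 : ℕ)) = (z + n) * Gamma (z + n) := by
          rw [Nat.cast_succ, ← add_assoc, Gamma_add_one hzn.ne']
      _ ≤ (z + n) * ((z + n) ^ n * Gamma z) := by gcongr
      _ ≤ (z + (n + 1 : ℕ)) ^ (n + 1) * Gamma z := by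
          have := (Gamma_pos_of_pos hz).le
          rw [← mul_assoc, ← pow_succ']
          gcongr
          linarith

lemma Real.Gamma_add_le_pow_ceil_mul {z a : ℝ} (hz : 0 < z) (h2 : 2 ≤ z + a) :
    Gamma (z + a) ≤ (z + ⌈a⌉₊) ^ ⌈a⌉₊ * Gamma z := by
  have ha := Nat.le_ceil a
  exact (Gamma_strictMonoOn_Ici.monotoneOn h2 (by simp only [mem_Ici]; linarith)
    (by linarith)).trans (Gamma_add_nat_le_pow_mul hz _)

lemma jacCoef_le (m : ℕ) {α β : ℝ} (hα : -1 < α) (hβ : 2 ≤ β) :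
    jacCoef α β m ≤ √(m.factorial / Gamma (m + α + 1)) *
      (β + (2 * m + ⌈α⌉₊ + 1)) ^ (⌈α⌉₊ + 1) := by
  set N := ⌈α⌉₊
  set s := β + (2 * m + N + 1) with hs_def
  have hαN := Nat.le_ceil α
  have hm : (0 : ℝ) ≤ m := m.cast_nonneg
  have hs : 1 ≤ s := by linarith [N.cast_nonneg (α := ℝ)]
  have hΓα : 0 < Gamma (m + α + 1) := Gamma_pos_of_pos (by linarith)
  have hΓβ : 0 < Gamma (m + β + 1) := Gamma_pos_of_pos (by linarith)
  have hΓαβ : 0 < Gamma (m + α + β + 1) := Gamma_pos_of_pos (by linarith)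
  have hΓ : Gamma (m + α + β + 1) ≤ s ^ N * Gamma (m + β + 1) := by
    have := Gamma_add_le_pow_ceil_mul (z := m + β + 1) (a := α) (by linarith) (by linarith)
    rw [show (m : ℝ) + β + 1 + α = m + α + β + 1 by ring] at this
    exact this.trans (by gcongr; linarith)
  have hsq : (2 * m + α + β + 1) * Gamma (m + α + β + 1) * m.factorial /
      (Gamma (m + α + 1) * Gamma (m + β + 1)) ≤ m.factorial / Gamma (m + α + 1) * s ^ (N + 1) := by
    rw [div_le_iff₀ (by positivity)]
    calc _ ≤ s * (s ^ N * Gamma (m + β + 1)) * m.factorial := by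
          gcongr
          linarith
      _ = _ := by field_simp; ring
  calc jacCoef α β m ≤ √(m.factorial / Gamma (m + α + 1) * (s ^ (N + 1)) ^ 2) :=
        sqrt_le_sqrt (hsq.trans (by gcongr; exact le_self_pow₀ (one_le_pow₀ hs) two_ne_zero))
    _ = _ := by rw [sqrt_mul (by positivity), sqrt_sq (by positivity)]

lemma Real.rpow_le_max_one_rpow {a b : ℝ} (ha : 0 < a) (hab : a ≤ b) (hb : b ≤ 1) (p : ℝ) :
    b ^ p ≤ max 1 (a ^ p) := by
  rcases le_total 0 p with hp | hp
  · exact le_max_of_le_left (rpow_le_one (ha.le.trans hab) hb hp)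
  · exact le_max_of_le_right (rpow_le_rpow_of_nonpos ha hab hp)

lemma tendsto_add_pow_mul_rpow_atTop_nhds_zero {r : ℝ} (hr0 : 0 < r) (hr1 : r < 1) (c : ℝ)
    (K : ℕ) : Tendsto (fun β : ℝ => (β + c) ^ K * r ^ β) atTop (nhds 0) := by
  have hb : 0 < -log r := neg_pos.2 (log_neg hr0 hr1)
  have h := ((tendsto_rpow_mul_exp_neg_mul_atTop_nhds_zero K _ hb).comp
    (tendsto_atTop_add_const_right _ c tendsto_id)).const_mul (r ^ (-c))
  rw [mul_zero] at h
  refine h.congr fun β => ?_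
  simp only [Function.comp_apply, id, rpow_natCast, neg_neg, ← rpow_def_of_pos hr0]
  rw [mul_left_comm, ← rpow_add hr0, neg_add_cancel_comm_assoc]

lemma abs_jacJ_le (m : ℕ) {α β x t : ℝ} (hβ : 0 ≤ β) (ht : t ∈ Ioc 0 x) (hx1 : x < 1) :
    |jacJ α β m t| ≤ jacCoef α β m * max 1 ((1 - x) ^ (α / 2)) * √x ^ β *
      ((m + 1) * (|α| + β + 3 * m) ^ m) := by
  obtain ⟨ht0, htx⟩ := ht
  have ht1 : t < 1 := htx.trans_lt hx1
  have hpow : t ^ (β / 2) ≤ √x ^ β := by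
    rw [sqrt_eq_rpow, ← rpow_mul (ht0.le.trans htx), one_div_mul_eq_div]
    exact rpow_le_rpow ht0.le htx (by positivity)
  have hκ : 0 ≤ jacCoef α β m := sqrt_nonneg _
  have hQ := abs_jacQ_le α β m ht0.le ht1.le
  rw [abs_of_nonneg hβ] at hQ
  rw [jacJ, abs_mul, abs_mul, abs_mul, abs_of_nonneg hκ,
    abs_of_nonneg (rpow_nonneg (by linarith) _), abs_of_nonneg (rpow_nonneg ht0.le _)]
  gcongr
  exact rpow_le_max_one_rpow (by linarith) (by linarith) (by linarith) _

/-- `lim_{β→+∞} sup_{t∈(0,x]} |J_m^{(α,β)}(t)| = 0`. -/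
theorem statement5 (α : ℝ) (hα : -1 < α) (m : ℕ) (x : ℝ) (hx0 : 0 < x) (hx1 : x < 1) :
    Tendsto (fun β : ℝ => ⨆ t ∈ Set.Ioc (0:ℝ) x, |jacJ α β m t|) atTop (nhds 0) := by
  set N := ⌈α⌉₊
  set c := |α| + 3 * m + N + 1 with hc
  set C := √(m.factorial / Gamma (m + α + 1)) * max 1 ((1 - x) ^ (α / 2)) * (m + 1)
  have hbound : ∀ᶠ β in atTop,
      ⨆ t ∈ Ioc 0 x, |jacJ α β m t| ≤ C * ((β + c) ^ (N + 1 + m) * √x ^ β) := by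
    filter_upwards [eventually_ge_atTop 2] with β hβ
    have hβc : 0 ≤ β + c := by positivity
    have hC : 0 ≤ C * ((β + c) ^ (N + 1 + m) * √x ^ β) := by positivity
    refine Real.iSup_le (fun t => Real.iSup_le (fun ht => ?_) hC) hC
    calc |jacJ α β m t|
        ≤ jacCoef α β m * max 1 ((1 - x) ^ (α / 2)) * √x ^ β *
            ((m + 1) * (|α| + β + 3 * m) ^ m) := abs_jacJ_le m (by linarith) ht hx1
      _ ≤ (√(m.factorial / Gamma (m + α + 1)) * (β + c) ^ (N + 1)) *
            max 1 ((1 - x) ^ (α / 2)) * √x ^ β * ((m + 1) * (β + c) ^ m) := by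
          gcongr ?_ * _ * _ * (_ * ?_ ^ m)
          · exact (jacCoef_le m hα hβ).trans (by gcongr; linarith [abs_nonneg α])
          · linarith
      _ = C * ((β + c) ^ (N + 1 + m) * √x ^ β) := by ring
  have hlim := (tendsto_add_pow_mul_rpow_atTop_nhds_zero (sqrt_pos.2 hx0)
    ((sqrt_lt' one_pos).2 (by rwa [one_pow])) c (N + 1 + m)).const_mul C
  rw [mul_zero] at hlim
  exact squeeze_zero' (Eventually.of_forall fun β =>
    Real.iSup_nonneg fun t => Real.iSup_nonneg fun _ => abs_nonneg _) hbound hlim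
end
end

section
/- Let n ≥ 1 and let G_0, …, G_{n−1} ∈ M_n(ℂ) satisfy: (1) G_{n−1} = c·E_{n−1,n−1} for some c ≠ 0; (2) for every p ∈ {0,…,n−2}, (G_p)_{n−1,p} ≠ 0; (3) for every p ∈ {1,…,n−2} and every k < p, (G_p)_{n−1,k} = 0. Then there exist complex numbers ν_{p,j} (for 0 ≤ p ≤ j ≤ n−1) such that for every p ∈ {0,…,n−1}, E_{n−1,p} = G_{n−1}·Σ_{j=p}^{n−1} ν_{p,j}·G_j, and moreover for all p, q ∈ {0,…,n−1}, E_{p,q} = (Σ_{j=p}^{n−1} conj(ν_{p,j})·G_j*)·G_{n−1}*·G_{n−1}·(Σ_{k=q}^{n−1} ν_{q,k}·G_k), where * denotes the conjugate transpose. -/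
open MeasureTheory Filter
open scoped ENNReal

noncomputable section

open scoped Matrix

/-! Let `M` be the matrix whose `j`-th row is the last row of `G j`. The hypotheses make `M`
upper triangular with nonzero diagonal, so `M⁻¹` is upper triangular as well, and
`X p = ∑_{j ≥ p} (M⁻¹)_{p,j} • G j` has last row `e_p`. Since `G (n-1) = c • E_{n-1,n-1}` only
sees the last row, `G (n-1) * (c⁻¹ • X p) = E_{n-1,p}`, and `E_{p,q} = E_{n-1,p}ᴴ * E_{n-1,q}`. -/

open Finset

namespace Matrix

variable {ι R : Type*} [Fintype ι]

theorem single_one_eq_conjTranspose_mul_single [DecidableEq ι] [Semiring R] [StarRing R]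
    (i p q : ι) :
    single p q (1 : R) = (single i p 1)ᴴ * single i q 1 := by
  simp

theorem single_mul_eq_single_of_row_eq [DecidableEq ι] [Semiring R] {A : Matrix ι ι R}
    {i p : ι} (h : A i = Pi.single p 1) : single i i 1 * A = single i p 1 := by
  ext r q
  by_cases hr : r = i
  · subst hr
    simp [h, Pi.single_apply, single_apply, eq_comm]
  · simp [hr, Ne.symm hr]

theorem sum_smul_apply_eq_vecMul {κ : Type*} [Semiring R] (w : ι → R) (G : ι → Matrix ι κ R)
    (i : ι) : (∑ j, w j • G j) i = w ᵥ* of (fun j => G j i) := by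
  ext q
  simp [sum_apply, vecMul, dotProduct]

theorem IsUpperTriangular.sum_Ici_smul_eq_sum [LinearOrder ι] [LocallyFiniteOrderTop ι]
    {E : Type*} [Semiring R] [AddCommMonoid E] [Module R E] {M : Matrix ι ι R}
    (hM : M.IsUpperTriangular) (p : ι) (f : ι → E) :
    ∑ j ∈ Ici p, M p j • f j = ∑ j, M p j • f j :=
  sum_subset (subset_univ _) fun j _ hj => by
    rw [hM (show j < p by simpa using hj), zero_smul]

theorem sum_Ici_inv_smul_apply [DecidableEq ι] [Field R] [LinearOrder ι]
    [LocallyFiniteOrderTop ι]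
    (G : ι → Matrix ι ι R) (i : ι) (hM : (of fun j => G j i).IsUpperTriangular)
    (hdiag : ∀ p, G p i p ≠ 0) (p : ι) :
    (∑ j ∈ Ici p, (of fun j => G j i)⁻¹ p j • G j) i = Pi.single p 1 := by
  set M : Matrix ι ι R := of fun j => G j i
  have hdet : IsUnit M.det := by
    rw [det_of_isUpperTriangular hM]
    exact IsUnit.mk0 _ (prod_ne_zero_iff.2 fun p _ => hdiag p)
  have : Invertible M := M.invertibleOfIsUnitDet hdet
  rw [IsUpperTriangular.sum_Ici_smul_eq_sum (blockTriangular_inv_of_blockTriangular hM),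
    sum_smul_apply_eq_vecMul]
  change (M⁻¹ * M) p = _
  ext q
  simp [nonsing_inv_mul M hdet, one_apply, Pi.single_apply, eq_comm]

end Matrix

open Matrix

/-- construction of the matrix units `E_{p,q}` from a family of generators
`G_0, …, G_{n-1}` with the prescribed last-row structure. -/
theorem statement7 (n : ℕ) (hn : 1 ≤ n) (G : Fin n → Matrix (Fin n) (Fin n) ℂ)
    (h1 : ∃ c : ℂ, c ≠ 0 ∧
      G ⟨n - 1, by omega⟩ = c • Matrix.single ⟨n - 1, by omega⟩ ⟨n - 1, by omega⟩ 1)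
    (h2 : ∀ p : Fin n, (p : ℕ) < n - 1 → G p ⟨n - 1, by omega⟩ p ≠ 0)
    (h3 : ∀ p : Fin n, 1 ≤ (p : ℕ) → (p : ℕ) < n - 1 →
      ∀ k : Fin n, (k : ℕ) < (p : ℕ) → G p ⟨n - 1, by omega⟩ k = 0) :
    ∃ ν : Fin n → Fin n → ℂ,
      (∀ p : Fin n, Matrix.single ⟨n - 1, by omega⟩ p 1
        = G ⟨n - 1, by omega⟩ * ∑ j ∈ Finset.Ici p, ν p j • G j) ∧
      (∀ p q : Fin n, Matrix.single p q 1
        = (∑ j ∈ Finset.Ici p, (starRingEnd ℂ) (ν p j) • (G j)ᴴ)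
          * ((G ⟨n - 1, by omega⟩)ᴴ * G ⟨n - 1, by omega⟩)
          * (∑ k ∈ Finset.Ici q, ν q k • G k)) := by
  obtain ⟨c, hc, hG⟩ := h1
  set N : Fin n := ⟨n - 1, by omega⟩
  have hGN : ∀ q, G N N q = if q = N then c else 0 := by
    simp [hG, single_apply, eq_comm]
  have hlt : ∀ p : Fin n, p ≠ N → (p : ℕ) < n - 1 := fun p hp => by
    have : (p : ℕ) ≠ n - 1 := fun h => hp (Fin.ext h)
    omega
  have hM : (of fun j => G j N).IsUpperTriangular := by
    intro j q (hqj : q < j)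
    by_cases hj : j = N
    · rw [hj] at hqj
      simp [hj, hGN, hqj.ne]
    · exact h3 j (by omega) (hlt j hj) q hqj
  have hdiag : ∀ p, G p N p ≠ 0 := fun p => by
    by_cases hp : p = N
    · simpa [hp, hGN] using hc
    · exact h2 p (hlt p hp)
  set ν : Fin n → Fin n → ℂ := fun p j => c⁻¹ * (of fun j => G j N)⁻¹ p j
  have hE : ∀ p, single N p 1 = G N * ∑ j ∈ Ici p, ν p j • G j := fun p => by
    simp only [ν, mul_smul, ← smul_sum, hG, smul_mul_smul_comm, mul_inv_cancel₀ hc, one_smul]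
    exact (single_mul_eq_single_of_row_eq (sum_Ici_inv_smul_apply G N hM hdiag p)).symm
  refine ⟨ν, hE, fun p q => ?_⟩
  rw [single_one_eq_conjTranspose_mul_single N, hE p, hE q, conjTranspose_mul, conjTranspose_sum]
  simp [conjTranspose_smul, Matrix.mul_assoc]
end
end

section
/- Let n ≥ 1 be an integer, α > −1 a real number, p ∈ ℕ₀, and ξ ∈ Ω_n. Then the matrix γ(g_p)_ξ ∈ M_{d_ξ}(ℂ) has real entries, is symmetric (γ(g_p)_{ξ,j,k} = γ(g_p)_{ξ,k,j}), and is (p−|ξ|)-antitriangular: for all j, k ∈ {0,…,d_ξ−1}, γ(g_p)_{ξ,j,k} = 0 whenever j+k < p−|ξ|, and γ(g_p)_{ξ,j,k} ≠ 0 whenever j+k = p−|ξ|. -/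
open MeasureTheory Filter
open scoped ENNReal

noncomputable section

/-!
With `t = r²` the entry is `κ_j κ_k ∫₀¹ S(t) Q_p^{(α,0)}(t) (1-t)^α dt`, where
`S = Q_j^{(α,|ξ|)} Q_k^{(α,|ξ|)} t^{|ξ|}` is a real polynomial of degree at most `j + k + |ξ|`
whose coefficient of `t^{j+k+|ξ|}` is a product of two positive leading coefficients; this gives
reality and symmetry at once. The polynomial `Q_p^{(α,0)}` is orthogonal to every polynomial of
degree `< p` for the weight `(1-t)^α`: against `t^m` each term is a Beta integral, and the sum
collapses to a `p`-th finite difference of a polynomial of degree `p - 1` in the summation index.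
So the entry vanishes below the antidiagonal, and on it equals a positive multiple of
`∫ t^p Q_p w = ∫ (Q_p)² w / lc(Q_p) > 0`.
-/

open Polynomial intervalIntegral

lemma gbinom_natCast (n j : ℕ) : gbinom n j = n.choose j := by
  rw [gbinom, ← descPochhammer_eval_eq_prod_range, Nat.cast_choose_eq_descPochhammer_div]

lemma gbinom_pos {x : ℝ} {j : ℕ} (h : ∀ i < j, (i : ℝ) < x) : 0 < gbinom x j :=
  div_pos (Finset.prod_pos fun i hi => sub_pos.2 (h i (Finset.mem_range.1 hi)))
    (Nat.cast_pos.2 j.factorial_pos)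

lemma sum_range_alternating_choose_mul_eval {R : Type*} [CommRing R] {P : R[X]} {p : ℕ}
    (hP : P.natDegree < p) :
    ∑ k ∈ Finset.range (p + 1), (-1 : R) ^ (p - k) * p.choose k * P.eval (k : R) = 0 := by
  have h := congr_fun (fwdDiff_iter_eq_zero_of_degree_lt hP) 0
  rw [fwdDiff_iter_eq_sum_shift] at h
  simpa [zsmul_eq_mul, mul_assoc] using h

def jacobiPoly (α β : ℝ) (m : ℕ) : ℝ[X] :=
  ∑ k ∈ Finset.range (m + 1),
    C (gbinom (α + β + m + k) k * gbinom (β + m) (m - k) * (-1) ^ (m - k)) * X ^ k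

lemma eval_jacobiPoly (α β : ℝ) (m : ℕ) (t : ℝ) :
    (jacobiPoly α β m).eval t = jacQ α β m t := by
  simp [jacobiPoly, jacQ, eval_finsetSum]

lemma natDegree_jacobiPoly_le (α β : ℝ) (m : ℕ) : (jacobiPoly α β m).natDegree ≤ m :=
  natDegree_sum_le_of_forall_le _ _ fun k hk =>
    natDegree_C_mul_X_pow_le _ k |>.trans (Nat.lt_succ_iff.1 (Finset.mem_range.1 hk))

lemma coeff_jacobiPoly_self (α β : ℝ) (m : ℕ) :
    (jacobiPoly α β m).coeff m = gbinom (α + β + m + m) m := by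
  rw [jacobiPoly, finsetSum_coeff, Finset.sum_eq_single_of_mem m (Finset.self_mem_range_succ m)]
  · simp [gbinom]
  · intro k _ hkm
    rw [coeff_C_mul_X_pow, if_neg (Ne.symm hkm)]

lemma coeff_jacobiPoly_self_pos {α β : ℝ} (hα : -1 < α) (hβ : 0 ≤ β) (m : ℕ) :
    0 < (jacobiPoly α β m).coeff m := by
  rw [coeff_jacobiPoly_self]
  refine gbinom_pos fun i hi => ?_
  have : (i : ℝ) + 1 ≤ m := by exact_mod_cast hi
  linarith

lemma jacCoef_pos {α : ℝ} (hα : -1 < α) (b m : ℕ) : 0 < jacCoef α b m := by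
  have hb : (0 : ℝ) ≤ b := b.cast_nonneg
  have hm : (0 : ℝ) ≤ m := m.cast_nonneg
  refine Real.sqrt_pos.2 (div_pos (mul_pos (mul_pos (by linarith) ?_) ?_) (mul_pos ?_ ?_))
  all_goals first
    | exact Real.Gamma_pos_of_pos (by linarith)
    | exact Nat.cast_pos.2 m.factorial_pos

def jacobiMoment (α : ℝ) (P : ℝ[X]) : ℝ := ∫ t in (0 : ℝ)..1, P.eval t * (1 - t) ^ α

section JacobiMoment

variable {α : ℝ}

lemma intervalIntegrable_eval_mul_one_sub_rpow (hα : -1 < α) (P : ℝ[X]) :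
    IntervalIntegrable (fun t => P.eval t * (1 - t) ^ α) volume 0 1 := by
  have hw : IntervalIntegrable (fun t : ℝ => (1 - t) ^ α) volume 0 1 := by
    simpa using ((intervalIntegrable_rpow' hα (a := 0) (b := 1)).comp_sub_left 1).symm
  exact hw.continuousOn_mul P.continuous.continuousOn

lemma jacobiMoment_add (hα : -1 < α) (P Q : ℝ[X]) :
    jacobiMoment α (P + Q) = jacobiMoment α P + jacobiMoment α Q := by
  simp only [jacobiMoment, eval_add, add_mul]
  exact integral_add (intervalIntegrable_eval_mul_one_sub_rpow hα P)
    (intervalIntegrable_eval_mul_one_sub_rpow hα Q)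

lemma jacobiMoment_C_mul (c : ℝ) (P : ℝ[X]) :
    jacobiMoment α (C c * P) = c * jacobiMoment α P := by
  simp only [jacobiMoment, eval_mul, eval_C, mul_assoc, intervalIntegral.integral_const_mul]

lemma jacobiMoment_sum (hα : -1 < α) {ι : Type*} (s : Finset ι) (P : ι → ℝ[X]) :
    jacobiMoment α (∑ i ∈ s, P i) = ∑ i ∈ s, jacobiMoment α (P i) := by
  simp only [jacobiMoment, eval_finsetSum, Finset.sum_mul]
  exact integral_finsetSum fun i _ => intervalIntegrable_eval_mul_one_sub_rpow hα (P i)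

/-- The Beta integral `B(i + 1, α + 1)`. -/
lemma jacobiMoment_X_pow (hα : -1 < α) (i : ℕ) :
    jacobiMoment α (X ^ i) = i.factorial / ∏ j ∈ Finset.range (i + 1), (α + 1 + j) := by
  have hβ := Complex.betaIntegral_eval_nat_add_one_right (u := (α : ℂ) + 1)
    (by simp; linarith) i
  rw [← Complex.betaIntegral_symm, Complex.betaIntegral] at hβ
  have hC : ((jacobiMoment α (X ^ i) : ℝ) : ℂ)
      = ((i.factorial / ∏ j ∈ Finset.range (i + 1), (α + 1 + j) : ℝ) : ℂ) := by
    push_cast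
    rw [← hβ, jacobiMoment, ← integral_ofReal]
    refine integral_congr fun x hx => ?_
    have hx1 : 0 ≤ 1 - x := by linarith [(Set.uIcc_of_le (zero_le_one (α := ℝ)) ▸ hx).2]
    simp only [eval_pow, eval_X, add_sub_cancel_right, Complex.cpow_natCast]
    push_cast
    rw [← Complex.ofReal_one, ← Complex.ofReal_sub, Complex.ofReal_cpow hx1]
  exact_mod_cast hC

lemma jacobiMoment_mul_self_pos (hα : -1 < α) {P : ℝ[X]} (hP : P ≠ 0) :
    0 < jacobiMoment α (P * P) := by
  set f : ℝ → ℝ := fun t => (P * P).eval t * (1 - t) ^ α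
  have hf : 0 ≤ᵐ[volume.restrict (Set.uIoc 0 1)] f := by
    rw [Set.uIoc_of_le zero_le_one]
    refine (ae_restrict_iff' measurableSet_Ioc).2 (Eventually.of_forall fun t ht => ?_)
    exact mul_nonneg (eval_mul (p := P) ▸ mul_self_nonneg _)
      (Real.rpow_nonneg (by linarith [ht.2]) α)
  rw [jacobiMoment, integral_pos_iff_support_of_nonneg_ae' hf
    (intervalIntegrable_eval_mul_one_sub_rpow hα _)]
  refine ⟨zero_lt_one, ?_⟩
  have hsub : Set.Ioo 0 1 \ {t | P.IsRoot t} ⊆ Function.support f ∩ Set.Ioc 0 1 := by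
    rintro t ⟨⟨h0, h1⟩, hroot⟩
    refine ⟨?_, h0, h1.le⟩
    simp only [Function.mem_support, f, eval_mul]
    exact mul_ne_zero (mul_self_ne_zero.2 hroot) (Real.rpow_pos_of_pos (sub_pos.2 h1) α).ne'
  calc 0 < volume (Set.Ioo (0 : ℝ) 1) := by simp
    _ = volume (Set.Ioo 0 1 \ {t | P.IsRoot t}) :=
      (measure_sdiff_null ((finite_setOfPred_isRoot hP).measure_zero _)).symm
    _ ≤ _ := measure_mono hsub

end JacobiMoment

section Orthogonality

variable {α : ℝ} {m p : ℕ}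

def momentNumerator (α : ℝ) (m p : ℕ) : ℝ[X] :=
  (∏ i ∈ Finset.range m, (X + C ((i : ℝ) + 1))) *
    ∏ i ∈ Finset.range (p - m - 1), (X + C (α + m + 2 + i))

lemma natDegree_momentNumerator_lt (hmp : m < p) : (momentNumerator α m p).natDegree < p := by
  have hcard (s : Finset ℕ) (c : ℕ → ℝ) :
      (∏ i ∈ s, (X + C (c i))).natDegree = s.card := by
    rw [natDegree_prod_of_monic _ _ fun i _ => monic_X_add_C (c i)]
    simp
  refine natDegree_mul_le.trans_lt ?_
  rw [hcard, hcard, Finset.card_range, Finset.card_range]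
  omega

lemma gbinom_mul_jacobiMoment_X_pow (hα : -1 < α) (hmp : m < p) (k : ℕ) :
    gbinom (α + p + k) k * jacobiMoment α (X ^ (m + k))
      = (momentNumerator α m p).eval (k : ℝ) / ∏ j ∈ Finset.range p, (α + 1 + j) := by
  have hpos (N : ℕ) : 0 < ∏ j ∈ Finset.range N, (α + 1 + j) :=
    Finset.prod_pos fun j _ => by have := j.cast_nonneg (α := ℝ); linarith
  have hsplit₁ := Finset.prod_range_add (fun j : ℕ => α + 1 + j) p k
  have hsplit₂ := Finset.prod_range_add (fun j : ℕ => α + 1 + j) (m + k + 1) (p - m - 1)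
  rw [show m + k + 1 + (p - m - 1) = p + k by omega, Finset.prod_congr rfl fun i _ =>
    show α + 1 + ((m + k + 1 + i : ℕ) : ℝ) = k + (α + m + 2 + i) by push_cast; ring]
    at hsplit₂
  have hrefl : ∏ i ∈ Finset.range k, (α + p + k - i)
      = ∏ i ∈ Finset.range k, (α + 1 + (p + i : ℕ)) := by
    rw [← Finset.prod_range_reflect]
    refine Finset.prod_congr rfl fun i hi => ?_
    have := Finset.mem_range.1 hi
    rw [Nat.sub_sub, Nat.cast_sub (by omega : 1 + i ≤ k)]
    push_cast
    ring
  have hfact : ((m + k).factorial : ℝ)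
      = k.factorial * ∏ i ∈ Finset.range m, ((k : ℝ) + (i + 1)) := by
    rw [add_comm, ← Nat.factorial_mul_ascFactorial, Nat.ascFactorial_eq_prod_range]
    push_cast
    exact congrArg _ (Finset.prod_congr rfl fun i _ => by ring)
  rw [jacobiMoment_X_pow hα, gbinom, hrefl, hfact, momentNumerator]
  simp only [eval_mul, eval_prod, eval_add, eval_X, eval_C]
  have := hpos p; have := hpos (m + k + 1)
  field_simp
  linear_combination hsplit₁.symm.trans hsplit₂

lemma jacobiMoment_X_pow_mul_jacobiPoly (hα : -1 < α) (hmp : m < p) :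
    jacobiMoment α (X ^ m * jacobiPoly α 0 p) = 0 := by
  have hterm : ∀ k ∈ Finset.range (p + 1),
      jacobiMoment α (X ^ m * (C (gbinom (α + 0 + p + k) k * gbinom (0 + p) (p - k) *
        (-1) ^ (p - k)) * X ^ k))
      = (-1) ^ (p - k) * p.choose k * (momentNumerator α m p).eval (k : ℝ) /
          ∏ j ∈ Finset.range p, (α + 1 + j) := by
    intro k hk
    rw [mul_left_comm, ← pow_add, jacobiMoment_C_mul, add_zero, zero_add, gbinom_natCast,
      Nat.choose_symm (Nat.lt_succ_iff.1 (Finset.mem_range.1 hk)), mul_div_assoc,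
      ← gbinom_mul_jacobiMoment_X_pow hα hmp]
    ring
  rw [jacobiPoly, Finset.mul_sum, jacobiMoment_sum hα, Finset.sum_congr rfl hterm,
    ← Finset.sum_div, sum_range_alternating_choose_mul_eval (natDegree_momentNumerator_lt hmp),
    zero_div]

lemma jacobiMoment_mul_jacobiPoly_of_degree_lt (hα : -1 < α) {R : ℝ[X]} (hR : R.degree < p) :
    jacobiMoment α (R * jacobiPoly α 0 p) = 0 := by
  rcases eq_or_ne R 0 with rfl | hR0
  · simp [jacobiMoment]
  rw [R.as_sum_range_C_mul_X_pow, Finset.sum_mul, jacobiMoment_sum hα]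
  refine Finset.sum_eq_zero fun i hi => ?_
  have hip : i < p := Nat.lt_of_lt_of_le (Finset.mem_range.1 hi)
    ((natDegree_lt_iff_degree_lt hR0).2 hR)
  rw [mul_assoc, jacobiMoment_C_mul, jacobiMoment_X_pow_mul_jacobiPoly hα hip, mul_zero]

lemma jacobiMoment_mul_jacobiPoly_of_natDegree_le (hα : -1 < α) {S : ℝ[X]}
    (hS : S.natDegree ≤ p) :
    jacobiMoment α (S * jacobiPoly α 0 p)
      = S.coeff p * jacobiMoment α (X ^ p * jacobiPoly α 0 p) := by
  have hR : (S - C (S.coeff p) * X ^ p).degree < (p : WithBot ℕ) := by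
    refine (degree_lt_iff_coeff_zero _ _).2 fun i hi => ?_
    rcases hi.eq_or_lt with rfl | hi
    · simp
    · simp [coeff_X_pow, hi.ne', coeff_eq_zero_of_natDegree_lt (hS.trans_lt hi)]
  calc jacobiMoment α (S * jacobiPoly α 0 p)
      = jacobiMoment α (C (S.coeff p) * (X ^ p * jacobiPoly α 0 p)
          + (S - C (S.coeff p) * X ^ p) * jacobiPoly α 0 p) := by ring_nf
    _ = _ := by
      rw [jacobiMoment_add hα, jacobiMoment_C_mul,
        jacobiMoment_mul_jacobiPoly_of_degree_lt hα hR, add_zero]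

lemma jacobiMoment_X_pow_mul_jacobiPoly_pos (hα : -1 < α) (p : ℕ) :
    0 < jacobiMoment α (X ^ p * jacobiPoly α 0 p) := by
  have hlead := coeff_jacobiPoly_self_pos hα le_rfl p
  have hsq := jacobiMoment_mul_self_pos hα (P := jacobiPoly α 0 p)
    (fun h => by simp [h] at hlead)
  rw [jacobiMoment_mul_jacobiPoly_of_natDegree_le hα (natDegree_jacobiPoly_le α 0 p)] at hsq
  exact pos_of_mul_pos_right hsq hlead.le

end Orthogonality

def gammaPoly (α : ℝ) (b j k : ℕ) : ℝ[X] := jacobiPoly α b j * jacobiPoly α b k * X ^ b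

lemma gammaPoly_comm (α : ℝ) (b j k : ℕ) : gammaPoly α b j k = gammaPoly α b k j := by
  rw [gammaPoly, gammaPoly, mul_comm (jacobiPoly α b j)]

lemma natDegree_gammaPoly_le (α : ℝ) (b j k : ℕ) :
    (gammaPoly α b j k).natDegree ≤ j + k + b :=
  natDegree_mul_le.trans <| add_le_add
    (natDegree_mul_le.trans (add_le_add (natDegree_jacobiPoly_le α b j)
      (natDegree_jacobiPoly_le α b k)))
    (natDegree_X_pow_le b)

lemma coeff_gammaPoly_pos {α : ℝ} (hα : -1 < α) (b j k : ℕ) :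
    0 < (gammaPoly α b j k).coeff (j + k + b) := by
  rw [gammaPoly, coeff_mul_X_pow, coeff_mul_add_eq_of_natDegree_le
    (natDegree_jacobiPoly_le α b j) (natDegree_jacobiPoly_le α b k)]
  exact mul_pos (coeff_jacobiPoly_self_pos hα b.cast_nonneg j)
    (coeff_jacobiPoly_self_pos hα b.cast_nonneg k)

lemma gammaEnt_gSym (α : ℝ) (p : ℕ) (ξ : ℤ) (j k : ℕ) :
    gammaEnt α (gSym α p) ξ j k = ((jacCoef α ξ.natAbs j * jacCoef α ξ.natAbs k *
      jacobiMoment α (gammaPoly α ξ.natAbs j k * jacobiPoly α 0 p) : ℝ) : ℂ) := by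
  rw [gammaEnt, jacobiMoment, Complex.ofReal_mul (_ * _), ← integral_ofReal]
  congr 1
  refine integral_congr fun t ht => ?_
  rw [Set.uIcc_of_le zero_le_one] at ht
  simp only [gSym, Real.sq_sqrt ht.1, gammaPoly, eval_mul, eval_pow, eval_X, eval_jacobiPoly]
  push_cast
  ring

theorem statement9_general (n : ℕ) (α : ℝ) (hα : -1 < α) (p : ℕ) (ξ : ℤ) :
    ∀ j k : Fin (dd n ξ),
      (gammaMat n α (gSym α p) ξ j k).im = 0 ∧
      gammaMat n α (gSym α p) ξ j k = gammaMat n α (gSym α p) ξ k j ∧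
      (((j : ℤ) + (k : ℤ) < (p : ℤ) - |ξ|) → gammaMat n α (gSym α p) ξ j k = 0) ∧
      (((j : ℤ) + (k : ℤ) = (p : ℤ) - |ξ|) → gammaMat n α (gSym α p) ξ j k ≠ 0) := by
  intro j k
  simp only [gammaMat, Matrix.of_apply, gammaEnt_gSym, Int.abs_eq_natAbs]
  set b := ξ.natAbs
  refine ⟨Complex.ofReal_im _, by rw [mul_comm (jacCoef α b j), gammaPoly_comm], fun hlt => ?_,
    fun heq => ?_⟩
  · have hdeg : (gammaPoly α b j k).degree < (p : WithBot ℕ) := degree_le_natDegree.trans_lt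
      (by exact_mod_cast (natDegree_gammaPoly_le α b j k).trans_lt (by omega))
    rw [jacobiMoment_mul_jacobiPoly_of_degree_lt hα hdeg, mul_zero, Complex.ofReal_zero]
  · obtain rfl : p = j + k + b := by omega
    rw [jacobiMoment_mul_jacobiPoly_of_natDegree_le hα (natDegree_gammaPoly_le α b j k)]
    exact_mod_cast (mul_pos (mul_pos (jacCoef_pos hα b j) (jacCoef_pos hα b k))
      (mul_pos (coeff_gammaPoly_pos hα b j k) (jacobiMoment_X_pow_mul_jacobiPoly_pos hα _))).ne'

/-- `γ(g_p)_ξ` is real, symmetric, and `(p-|ξ|)`-antitriangular. -/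
theorem statement9 (n : ℕ) (hn : 1 ≤ n) (α : ℝ) (hα : -1 < α) (p : ℕ) (ξ : ℤ)
    (hξ : 1 - (n : ℤ) ≤ ξ) :
    ∀ j k : Fin (dd n ξ),
      (gammaMat n α (gSym α p) ξ j k).im = 0 ∧
      gammaMat n α (gSym α p) ξ j k = gammaMat n α (gSym α p) ξ k j ∧
      (((j : ℤ) + (k : ℤ) < (p : ℤ) - |ξ|) → gammaMat n α (gSym α p) ξ j k = 0) ∧
      (((j : ℤ) + (k : ℤ) = (p : ℤ) - |ξ|) → gammaMat n α (gSym α p) ξ j k ≠ 0) :=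
  statement9_general n α hα p ξ
end
end

section
/- Let n ≥ 1 be an integer, α > −1 a real number, p ∈ ℕ₀, and ξ ∈ Ω_n with p − |ξ| > 2·min(n+ξ, n) − 2. Then γ(g_p)_ξ is the zero matrix in M_{d_ξ}(ℂ). -/
open MeasureTheory Filter
open scoped ENNReal

noncomputable section

namespace S16

lemma weight_integrable {α : ℝ} (hα : -1 < α) :
    IntervalIntegrable (fun t : ℝ => (1 - t) ^ α) volume 0 1 := by
  have h := (intervalIntegral.intervalIntegrable_rpow' (a := 0) (b := 1) hα).comp_sub_left 1
  simpa using h.symm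

lemma integ_mul {α : ℝ} (hα : -1 < α) {c : ℝ → ℝ} (hc : Continuous c) :
    IntervalIntegrable (fun t : ℝ => c t * (1 - t) ^ α) volume 0 1 :=
  (weight_integrable hα).continuousOn_mul hc.continuousOn

lemma Gamma_prod {x : ℝ} (hx : 0 < x) (s : ℕ) :
    Real.Gamma (x + s) = Real.Gamma x * ∏ i ∈ Finset.range s, (x + i) := by
  induction s with
  | zero => simp
  | succ s ih =>
    have h1 : x + (s + 1 : ℕ) = (x + s) + 1 := by push_cast; ring
    rw [h1, Real.Gamma_add_one (by positivity), ih, Finset.prod_range_succ]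
    ring

def Bv (α : ℝ) (s : ℕ) : ℝ := ∫ t in (0:ℝ)..1, t ^ s * (1 - t) ^ α

lemma Bv_eq {α : ℝ} (hα : -1 < α) (s : ℕ) :
    Bv α s * ∏ i ∈ Finset.range (s + 1), (α + 1 + i) = (s.factorial : ℝ) := by
  have hα1 : (0:ℝ) < α + 1 := by linarith
  have hbc : Complex.betaIntegral ((s : ℂ) + 1) ((α : ℂ) + 1) = ((Bv α s : ℝ) : ℂ) := by
    unfold Complex.betaIntegral Bv
    rw [← intervalIntegral.integral_ofReal]
    apply intervalIntegral.integral_congr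
    intro t ht
    rw [Set.uIcc_of_le (by norm_num : (0:ℝ) ≤ 1)] at ht
    have h1 : ((t:ℂ)) ^ ((s:ℂ) + 1 - 1) = ((t^s : ℝ) : ℂ) := by
      rw [add_sub_cancel_right, Complex.cpow_natCast]; push_cast; ring
    have h2 : ((1:ℂ) - (t:ℂ)) ^ ((α:ℂ) + 1 - 1) = (((1-t)^α : ℝ) : ℂ) := by
      rw [add_sub_cancel_right, show ((1:ℂ) - (t:ℂ)) = (((1-t : ℝ)):ℂ) by push_cast; ring,
        ← Complex.ofReal_cpow (by linarith [ht.2])]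
    show (t:ℂ) ^ ((s:ℂ)+1-1) * ((1:ℂ) - (t:ℂ)) ^ ((α:ℂ)+1-1) = _
    rw [h1, h2]; push_cast; ring
  have hG := Complex.Gamma_mul_Gamma_eq_betaIntegral
    (s := (s : ℂ) + 1) (t := (α : ℂ) + 1) (by simp; positivity) (by simp; linarith)
  rw [hbc, Complex.Gamma_nat_eq_factorial] at hG
  have h2 : ((s : ℂ) + 1 + ((α : ℂ) + 1)) = ((α + 1 + (s + 1 : ℕ) : ℝ) : ℂ) := by push_cast; ring
  have h3 : ((α : ℂ) + 1) = ((α + 1 : ℝ) : ℂ) := by push_cast; ring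
  rw [h2, h3, Complex.Gamma_ofReal, Complex.Gamma_ofReal] at hG
  have hreal : (s.factorial : ℝ) * Real.Gamma (α + 1) = Real.Gamma (α + 1 + (s + 1 : ℕ)) * Bv α s := by
    exact_mod_cast hG
  rw [Gamma_prod hα1 (s + 1)] at hreal
  have hΓ : 0 < Real.Gamma (α + 1) := Real.Gamma_pos_of_pos hα1
  have h4 : ∏ i ∈ Finset.range (s + 1), (α + 1 + i) = ∏ i ∈ Finset.range (s + 1), (α + 1 + i) := rfl
  nlinarith [hreal, hΓ]


lemma fact_prod (k : ℕ) : ∀ m : ℕ,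
    ((m + k).factorial : ℝ) = (k.factorial : ℝ) * ∏ i ∈ Finset.range m, ((k:ℝ) + 1 + i) := by
  intro m
  induction m with
  | zero => simp
  | succ m ih =>
    have h1 : m + 1 + k = (m + k) + 1 := by omega
    rw [h1, Nat.factorial_succ, Finset.prod_range_succ]
    push_cast
    rw [ih]
    push_cast
    ring

lemma gbinom_mul_factorial (x : ℝ) (j : ℕ) :
    gbinom x j * (j.factorial : ℝ) = ∏ i ∈ Finset.range j, (x - i) := by
  unfold gbinom
  field_simp

lemma gbinom_nat {p j : ℕ} (h : j ≤ p) : gbinom (p : ℝ) j = p.choose j := by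
  have h1 : ∏ i ∈ Finset.range j, ((p:ℝ) - i) = ((p.descFactorial j : ℕ) : ℝ) := by
    rw [Nat.descFactorial_eq_prod_range, Nat.cast_prod]
    apply Finset.prod_congr rfl
    intro i hi
    simp only [Finset.mem_range] at hi
    rw [Nat.cast_sub (by omega)]
  unfold gbinom
  rw [h1, Nat.descFactorial_eq_factorial_mul_choose]
  push_cast
  rw [mul_comm]
  field_simp

lemma fwd_poly : ∀ (p : ℕ) (P : Polynomial ℝ), P.natDegree < p →
    (fwdDiff (1:ℝ))^[p] (fun x => P.eval x) = 0 := by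
  intro p
  induction p with
  | zero => intro P h; exact absurd h (Nat.not_lt_zero _)
  | succ p ih =>
    intro P hP
    rw [Function.iterate_succ_apply]
    have hQ : fwdDiff (1:ℝ) (fun x => P.eval x)
        = fun x => (P.comp (Polynomial.X + Polynomial.C 1) - P).eval x := by
      funext x
      simp [fwdDiff, Polynomial.eval_comp]
    rw [hQ]
    set Q := P.comp (Polynomial.X + Polynomial.C 1) - P with hQdef
    rcases eq_or_ne Q 0 with h0 | h0
    · rw [h0]
      have hz : (fun x : ℝ => (0:Polynomial ℝ).eval x) = (0 : ℝ → ℝ) := by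
        funext x; simp
      rw [hz]
      apply Function.iterate_fixed
      funext x
      simp [fwdDiff]
    · have hP0 : P.natDegree ≠ 0 := by
        intro h0'
        obtain ⟨a, rfl⟩ := Polynomial.natDegree_eq_zero.mp h0'
        exact h0 (by simp [hQdef])
      have hPne : P ≠ 0 := fun hh => hP0 (by simp [hh])
      have hcompdeg : (P.comp (Polynomial.X + Polynomial.C 1)).natDegree = P.natDegree := by
        rw [Polynomial.natDegree_comp, Polynomial.natDegree_X_add_C, mul_one]
      have hcompne : P.comp (Polynomial.X + Polynomial.C 1) ≠ 0 := by
        intro hh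
        rw [hh] at hcompdeg
        exact hP0 (by simpa using hcompdeg.symm)
      have hdeg : (P.comp (Polynomial.X + Polynomial.C 1)).degree = P.degree := by
        rw [Polynomial.degree_eq_natDegree hcompne, Polynomial.degree_eq_natDegree hPne, hcompdeg]
      have hlc : (P.comp (Polynomial.X + Polynomial.C 1)).leadingCoeff = P.leadingCoeff := by
        rw [Polynomial.leadingCoeff_comp (by rw [Polynomial.natDegree_X_add_C]; omega)]
        rw [show (Polynomial.X + Polynomial.C (1:ℝ)) = Polynomial.X + Polynomial.C 1 from rfl,
          Polynomial.leadingCoeff_X_add_C, one_pow, mul_one]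
      have hdlt : Q.degree < P.degree := Polynomial.degree_sub_lt hdeg hcompne hlc |>.trans_le (le_of_eq hdeg)
      have hdQ : Q.natDegree < p := by
        have := Polynomial.natDegree_lt_natDegree h0 hdlt
        have hP' : P.natDegree ≤ p := by omega
        omega
      exact ih Q hdQ

lemma altsum {p : ℕ} (P : Polynomial ℝ) (hP : P.natDegree < p) :
    ∑ k ∈ Finset.range (p + 1), (-1:ℝ)^(p-k) * (p.choose k) * P.eval (k:ℝ) = 0 := by
  have h := fwdDiff_iter_eq_sum_shift (h := (1:ℝ)) (fun x => P.eval x) p 0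
  rw [fwd_poly p P hP] at h
  simp only [Pi.zero_apply, zero_add, nsmul_eq_mul, mul_one, zsmul_eq_mul] at h
  rw [eq_comm] at h
  rw [← h]
  apply Finset.sum_congr rfl
  intro k hk
  push_cast
  ring

lemma contQ (α β : ℝ) (m : ℕ) : Continuous fun t => jacQ α β m t := by
  unfold jacQ
  exact continuous_finset_sum _ fun k _ => by fun_prop

lemma prod_pos_ne {α : ℝ} (hα : -1 < α) (s : ℕ) :
    (∏ i ∈ Finset.range s, (α + 1 + (i:ℝ))) ≠ 0 := by
  apply ne_of_gt
  apply Finset.prod_pos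
  intro i _
  have : (0:ℝ) ≤ i := Nat.cast_nonneg i
  linarith

lemma key {α : ℝ} (hα : -1 < α) {m p : ℕ} (hmp : m < p) :
    (∫ t in (0:ℝ)..1, t ^ m * jacQ α 0 p t * (1 - t) ^ α) = 0 := by
  classical
  set ck : ℕ → ℝ := fun k =>
    gbinom (α + 0 + (p:ℝ) + (k:ℝ)) k * gbinom (0 + (p:ℝ)) (p - k) * (-1 : ℝ) ^ (p - k) with hck
  -- Step 1: expand the integrand
  have hfun : (fun t : ℝ => t ^ m * jacQ α 0 p t * (1 - t) ^ α)
      = fun t => ∑ k ∈ Finset.range (p + 1), ck k * (t ^ (m + k) * (1 - t) ^ α) := by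
    funext t
    simp only [jacQ, hck]
    rw [Finset.mul_sum, Finset.sum_mul]
    exact Finset.sum_congr rfl fun k _ => by ring
  rw [hfun, intervalIntegral.integral_finset_sum (fun k _ =>
    ((integ_mul hα (continuous_pow (m + k))).const_mul (ck k)))]
  simp only [intervalIntegral.integral_const_mul]
  have hBv : ∀ k, (∫ t in (0:ℝ)..1, t ^ (m + k) * (1 - t) ^ α) = Bv α (m + k) := fun k => rfl
  -- Step 2: the comparison polynomial
  set P : Polynomial ℝ :=
    (∏ i ∈ Finset.range m, (Polynomial.X + Polynomial.C ((1:ℝ) + i))) *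
      ∏ i ∈ Finset.range (p - m - 1), (Polynomial.X + Polynomial.C (α + m + 2 + i)) with hP
  have hmon1 : (∏ i ∈ Finset.range m, (Polynomial.X + Polynomial.C ((1:ℝ) + i))).Monic :=
    Polynomial.monic_prod_of_monic _ _ fun i _ => Polynomial.monic_X_add_C _
  have hmon2 : (∏ i ∈ Finset.range (p-m-1),
      (Polynomial.X + Polynomial.C (α + m + 2 + i))).Monic :=
    Polynomial.monic_prod_of_monic _ _ fun i _ => Polynomial.monic_X_add_C _
  have hPdeg : P.natDegree < p := by
    rw [hP, hmon1.natDegree_mul hmon2,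
      Polynomial.natDegree_prod_of_monic _ _ (fun i _ => Polynomial.monic_X_add_C _),
      Polynomial.natDegree_prod_of_monic _ _ (fun i _ => Polynomial.monic_X_add_C _)]
    simp only [Polynomial.natDegree_X_add_C]
    rw [Finset.sum_const, Finset.sum_const]
    simp only [Finset.card_range, smul_eq_mul, mul_one]
    omega
  have hPeval : ∀ x : ℝ, P.eval x =
      (∏ i ∈ Finset.range m, (x + (1 + i))) *
        ∏ i ∈ Finset.range (p - m - 1), (x + (α + m + 2 + i)) := by
    intro x
    simp [hP, Polynomial.eval_prod]
  -- Step 3: termwise identity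
  have hterm : ∀ k ∈ Finset.range (p + 1),
      ck k * Bv α (m + k) * (∏ i ∈ Finset.range p, (α + 1 + (i:ℝ)))
        = (-1:ℝ)^(p-k) * (p.choose k) * P.eval (k:ℝ) := by
    intro k hk
    simp only [Finset.mem_range] at hk
    have hkp : k ≤ p := by omega
    -- the gbinom over p is a binomial coefficient
    have hch : gbinom (0 + (p:ℝ)) (p - k) = (p.choose k : ℝ) := by
      rw [zero_add, gbinom_nat (Nat.sub_le p k), Nat.choose_symm hkp]
    -- main product identity
    have hstar : (∏ i ∈ Finset.range k, (α + 0 + (p:ℝ) + (k:ℝ) - (i:ℝ)))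
        * (((m+k).factorial : ℝ)) * (∏ i ∈ Finset.range p, (α + 1 + (i:ℝ)))
        = P.eval (k:ℝ) * (k.factorial : ℝ)
          * ∏ i ∈ Finset.range (m + k + 1), (α + 1 + (i:ℝ)) := by
      have ha : ∏ i ∈ Finset.range k, (α + 0 + (p:ℝ) + (k:ℝ) - (i:ℝ))
          = ∏ i ∈ Finset.range k, (α + 1 + ((p + i : ℕ) : ℝ)) := by
        calc ∏ i ∈ Finset.range k, (α + 0 + (p:ℝ) + (k:ℝ) - (i:ℝ))
            = ∏ i ∈ Finset.range k,
                (fun j : ℕ => α + 1 + ((p + j : ℕ) : ℝ)) (k - 1 - i) := by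
              apply Finset.prod_congr rfl
              intro i hi
              simp only [Finset.mem_range] at hi
              have h1 : ((p + (k - 1 - i) : ℕ) : ℝ) = (p:ℝ) + (k:ℝ) - 1 - (i:ℝ) := by
                have h2 : (p + (k - 1 - i)) = (p + k - 1) - i := by omega
                rw [h2, Nat.cast_sub (by omega), Nat.cast_sub (by omega)]
                push_cast; ring
              simp only [h1]
              ring
          _ = _ := by exact Finset.prod_range_reflect (fun j : ℕ => α + 1 + ((p + j : ℕ) : ℝ)) k
      have hb : (∏ i ∈ Finset.range p, (α + 1 + (i:ℝ)))
          * ∏ i ∈ Finset.range k, (α + 1 + ((p + i : ℕ) : ℝ))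
          = ∏ i ∈ Finset.range (p + k), (α + 1 + (i:ℝ)) := by
        rw [Finset.prod_range_add (fun i : ℕ => α + 1 + (i:ℝ)) p k]
      have hc : ∏ i ∈ Finset.range (p + k), (α + 1 + (i:ℝ))
          = (∏ i ∈ Finset.range (m + k + 1), (α + 1 + (i:ℝ)))
            * ∏ i ∈ Finset.range (p - m - 1), (α + 1 + ((m + k + 1 + i : ℕ) : ℝ)) := by
        rw [← Finset.prod_range_add (fun i : ℕ => α + 1 + (i:ℝ)) (m+k+1) (p-m-1),
          show m + k + 1 + (p - m - 1) = p + k by omega]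
      have hd : ∏ i ∈ Finset.range (p - m - 1), (α + 1 + ((m + k + 1 + i : ℕ) : ℝ))
          = ∏ i ∈ Finset.range (p - m - 1), ((k:ℝ) + (α + m + 2 + i)) := by
        apply Finset.prod_congr rfl
        intro i _
        push_cast
        ring
      rw [ha, fact_prod k m, hPeval]
      calc (∏ i ∈ Finset.range k, (α + 1 + ((p + i : ℕ) : ℝ)))
            * ((k.factorial : ℝ) * ∏ i ∈ Finset.range m, ((k:ℝ) + 1 + i))
            * (∏ i ∈ Finset.range p, (α + 1 + (i:ℝ)))
          = ((∏ i ∈ Finset.range p, (α + 1 + (i:ℝ)))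
              * ∏ i ∈ Finset.range k, (α + 1 + ((p + i : ℕ) : ℝ)))
            * ((k.factorial : ℝ) * ∏ i ∈ Finset.range m, ((k:ℝ) + 1 + i)) := by ring
        _ = (∏ i ∈ Finset.range (p + k), (α + 1 + (i:ℝ)))
            * ((k.factorial : ℝ) * ∏ i ∈ Finset.range m, ((k:ℝ) + 1 + i)) := by rw [hb]
        _ = ((∏ i ∈ Finset.range (m + k + 1), (α + 1 + (i:ℝ)))
              * ∏ i ∈ Finset.range (p - m - 1), ((k:ℝ) + (α + m + 2 + i)))
            * ((k.factorial : ℝ) * ∏ i ∈ Finset.range m, ((k:ℝ) + 1 + i)) := by rw [hc, hd]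
        _ = ((∏ i ∈ Finset.range m, ((k:ℝ) + (1 + i)))
              * ∏ i ∈ Finset.range (p - m - 1), ((k:ℝ) + (α + m + 2 + i)))
            * (k.factorial : ℝ) * ∏ i ∈ Finset.range (m + k + 1), (α + 1 + (i:ℝ)) := by
          rw [show ∏ i ∈ Finset.range m, ((k:ℝ) + (1 + i))
              = ∏ i ∈ Finset.range m, ((k:ℝ) + 1 + i) from
            Finset.prod_congr rfl fun i _ => by ring]
          ring
    -- divide through
    have hkfac : (k.factorial : ℝ) ≠ 0 := Nat.cast_ne_zero.mpr k.factorial_ne_zero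
    have hden : (∏ i ∈ Finset.range (m + k + 1), (α + 1 + (i:ℝ))) ≠ 0 := prod_pos_ne hα _
    apply mul_right_cancel₀ (mul_ne_zero hkfac hden)
    have hBveq := Bv_eq hα (m + k)
    calc ck k * Bv α (m + k) * (∏ i ∈ Finset.range p, (α + 1 + (i:ℝ)))
          * ((k.factorial : ℝ) * ∏ i ∈ Finset.range (m + k + 1), (α + 1 + (i:ℝ)))
        = (gbinom (α + 0 + (p:ℝ) + (k:ℝ)) k * (k.factorial : ℝ))
          * (Bv α (m + k) * ∏ i ∈ Finset.range (m + k + 1), (α + 1 + (i:ℝ)))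
          * (∏ i ∈ Finset.range p, (α + 1 + (i:ℝ)))
          * (gbinom (0 + (p:ℝ)) (p - k) * (-1:ℝ)^(p-k)) := by
          simp only [hck]; ring
      _ = (∏ i ∈ Finset.range k, (α + 0 + (p:ℝ) + (k:ℝ) - (i:ℝ)))
          * (((m+k).factorial : ℝ))
          * (∏ i ∈ Finset.range p, (α + 1 + (i:ℝ)))
          * ((p.choose k : ℝ) * (-1:ℝ)^(p-k)) := by
          rw [gbinom_mul_factorial, hBveq, hch]
      _ = ((-1:ℝ)^(p-k) * (p.choose k) * P.eval (k:ℝ))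
          * ((k.factorial : ℝ) * ∏ i ∈ Finset.range (m + k + 1), (α + 1 + (i:ℝ))) := by
          rw [hstar]; ring
  -- Step 4: conclude
  have hDp : (∏ i ∈ Finset.range p, (α + 1 + (i:ℝ))) ≠ 0 := prod_pos_ne hα p
  have hsum : (∑ k ∈ Finset.range (p + 1), ck k * Bv α (m + k))
      * (∏ i ∈ Finset.range p, (α + 1 + (i:ℝ))) = 0 := by
    rw [Finset.sum_mul]
    rw [Finset.sum_congr rfl hterm]
    exact altsum P hPdeg
  simp only [hBv]
  exact (mul_eq_zero.mp hsum).resolve_right hDp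


set_option maxHeartbeats 1000000 in
lemma ortho {α : ℝ} (hα : -1 < α) (β : ℝ) (j k N p : ℕ) (h : j + k + N < p) :
    (∫ t in (0:ℝ)..1,
      jacQ α β j t * jacQ α β k t * (1 - t) ^ α * t ^ N * jacQ α 0 p t) = 0 := by
  classical
  set cj : ℕ → ℝ := fun a =>
    gbinom (α + β + (j:ℝ) + (a:ℝ)) a * gbinom (β + (j:ℝ)) (j - a) * (-1 : ℝ) ^ (j - a) with hcj
  set ck : ℕ → ℝ := fun b =>
    gbinom (α + β + (k:ℝ) + (b:ℝ)) b * gbinom (β + (k:ℝ)) (k - b) * (-1 : ℝ) ^ (k - b) with hck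
  have hfun : (fun t : ℝ =>
        jacQ α β j t * jacQ α β k t * (1 - t) ^ α * t ^ N * jacQ α 0 p t)
      = fun t => ∑ q ∈ Finset.range (j + 1) ×ˢ Finset.range (k + 1),
          (cj q.1 * ck q.2) * (t ^ (q.1 + q.2 + N) * jacQ α 0 p t * (1 - t) ^ α) := by
    funext t
    rw [Finset.sum_product]
    conv_lhs => rw [show jacQ α β j t = ∑ a ∈ Finset.range (j + 1), cj a * t ^ a from rfl,
      show jacQ α β k t = ∑ b ∈ Finset.range (k + 1), ck b * t ^ b from rfl]
    rw [Finset.sum_mul_sum, Finset.sum_mul, Finset.sum_mul, Finset.sum_mul]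
    refine Finset.sum_congr rfl fun a _ => ?_
    rw [Finset.sum_mul, Finset.sum_mul, Finset.sum_mul]
    refine Finset.sum_congr rfl fun b _ => ?_
    ring
  have hint : ∀ (a b : ℕ), IntervalIntegrable
      (fun t : ℝ => (cj a * ck b) * (t ^ (a + b + N) * jacQ α 0 p t * (1 - t) ^ α))
      volume 0 1 := by
    intro a b
    exact (integ_mul hα ((continuous_pow (a + b + N)).mul (contQ α 0 p))).const_mul _
  have hIS := intervalIntegral.integral_finset_sum (μ := volume) (a := (0:ℝ)) (b := 1)
    (s := Finset.range (j + 1) ×ˢ Finset.range (k + 1))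
    (f := fun (q : ℕ × ℕ) (t : ℝ) =>
      (cj q.1 * ck q.2) * (t ^ (q.1 + q.2 + N) * jacQ α 0 p t * (1 - t) ^ α))
    (fun q _ => hint q.1 q.2)
  rw [hfun, hIS]
  apply Finset.sum_eq_zero
  intro q hq
  simp only [Finset.mem_product, Finset.mem_range] at hq
  rw [intervalIntegral.integral_const_mul, key hα (by omega : q.1 + q.2 + N < p), mul_zero]

end S16

/-- if `p - |ξ| > 2·min(n+ξ,n) - 2` then `γ(g_p)_ξ = 0`. -/
theorem statement16 (n : ℕ) (hn : 1 ≤ n) (α : ℝ) (hα : -1 < α) (p : ℕ) (ξ : ℤ)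
    (hξ : 1 - (n : ℤ) ≤ ξ) (h : (p : ℤ) - |ξ| > 2 * (dd n ξ : ℤ) - 2) :
    gammaMat n α (gSym α p) ξ = 0 := by
  ext j k
  show gammaEnt α (gSym α p) ξ (j : ℕ) (k : ℕ) = 0
  set N := ξ.natAbs with hN
  have habs : |ξ| = (N : ℤ) := Int.abs_eq_natAbs ξ
  have hjk : (j : ℕ) + (k : ℕ) + N < p := by
    have hj := j.isLt
    have hk := k.isLt
    rw [habs] at h
    omega
  unfold gammaEnt
  have hcong : Set.EqOn
      (fun t : ℝ => gSym α p (Real.sqrt t) *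
        ((jacQ α N (j:ℕ) t * jacQ α N (k:ℕ) t * (1 - t) ^ α * t ^ N : ℝ) : ℂ))
      (fun t : ℝ =>
        ((jacQ α N (j:ℕ) t * jacQ α N (k:ℕ) t * (1 - t) ^ α * t ^ N * jacQ α 0 p t : ℝ) : ℂ))
      (Set.uIcc (0:ℝ) 1) := by
    intro t ht
    rw [Set.uIcc_of_le (by norm_num : (0:ℝ) ≤ 1)] at ht
    have hsq : Real.sqrt t ^ 2 = t := Real.sq_sqrt ht.1
    simp only [gSym, hsq]
    push_cast
    ring
  rw [intervalIntegral.integral_congr hcong, intervalIntegral.integral_ofReal,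
    S16.ortho hα N (j:ℕ) (k:ℕ) N p hjk]
  simp
end
end
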